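/- arXiv:math/0103153 — 7 statements merged into one kernel-verified Lean document; each statement's English description precedes it below -/
import Mathlib

section
/- Fix natural numbers n ≥ 2 and k ≥ 1. Let G be the set of all k-tuples ḡ = ⟨g_i : i < k⟩ of functions g_i : n^k → 2. For y ∈ n^ω and (ḡ, j) ∈ G × k, define y^{ḡ,j} ∈ 2^ω by y^{ḡ,j}(mk + i) = g_i(the block y↾[mk+j, (m+1)k+j), viewed as an element of n^k) for all m ∈ ω and i < k. Then there is a map assigning to each family π̄ = ⟨π^{ḡ,j} : (ḡ,j) ∈ G × k⟩ of predictors π^{ḡ,j} : 2^{<ω} → 2 a predictor ψ_{π̄} : n^{<ω} → n with the following property: for every y ∈ n^ω, if for every (ḡ,j) ∈ G × k the predictor π^{ḡ,j} weakly k-constantly predicts y^{ḡ,j}, then ψ_{π̄} k-constantly predicts y. -/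
open Cardinal

/-- The initial segment `x↾i` of `x : n^ω`, as a finite sequence. -/
def seg {n : ℕ} (x : ℕ → Fin n) (i : ℕ) : List (Fin n) :=
  List.ofFn (fun j : Fin i => x j)

/-- `π` k-constantly predicts `x`: for all but finitely many `m` there is
`i ∈ [m, m+k)` with `x i = π (x↾i)`. -/
def KPred {n : ℕ} (k : ℕ) (π : List (Fin n) → Fin n) (x : ℕ → Fin n) : Prop :=
  ∃ N, ∀ m, N ≤ m → ∃ i, m ≤ i ∧ i < m + k ∧ x i = π (seg x i)

/-- `π` weakly k-constantly predicts `x`: for all but finitely many `m` there is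
`i < k` with `x (m*k+i) = π (x↾(m*k+i))`. -/
def WPred {n : ℕ} (k : ℕ) (π : List (Fin n) → Fin n) (x : ℕ → Fin n) : Prop :=
  ∃ N, ∀ m, N ≤ m → ∃ i, i < k ∧ x (m * k + i) = π (seg x (m * k + i))

/-- The k-constant prediction number 𝔳ₙᶜᵒⁿˢᵗ(k). -/
noncomputable def vConst (n k : ℕ) : Cardinal :=
  sInf { c | ∃ P : Set (List (Fin n) → Fin n), #P = c ∧
    ∀ x : ℕ → Fin n, ∃ π ∈ P, KPred k π x }

/-- The weak k-constant prediction number 𝔳̄ₙᶜᵒⁿˢᵗ(k). -/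
noncomputable def vBar (n k : ℕ) : Cardinal :=
  sInf { c | ∃ P : Set (List (Fin n) → Fin n), #P = c ∧
    ∀ x : ℕ → Fin n, ∃ π ∈ P, WPred k π x }

/-- The k-constant evasion number 𝔢ₙᶜᵒⁿˢᵗ(k). -/
noncomputable def eConst (n k : ℕ) : Cardinal :=
  sInf { c | ∃ F : Set (ℕ → Fin n), #F = c ∧
    ∀ π : List (Fin n) → Fin n, ∃ x ∈ F, ¬ KPred k π x }

/-- The weak k-constant evasion number 𝔢̄ₙᶜᵒⁿˢᵗ(k). -/
noncomputable def eBar (n k : ℕ) : Cardinal :=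
  sInf { c | ∃ F : Set (ℕ → Fin n), #F = c ∧
    ∀ π : List (Fin n) → Fin n, ∃ x ∈ F, ¬ WPred k π x }

namespace Stmt0Aux

def flip2 (x : Fin 2) : Fin 2 := if x = 0 then 1 else 0

lemma flip2_ne (x : Fin 2) : flip2 x ≠ x := by fin_cases x <;> simp [flip2]

abbrev Blk (n k : ℕ) : Type := Fin k → Fin n

abbrev Gt (n k : ℕ) : Type := Fin k → ((Fin k → Fin n) → Fin 2)

abbrev Pib (n k : ℕ) : Type := (Gt n k × Fin k) → (List (Fin 2) → Fin 2)

section Main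

variable {n k : ℕ}

def d0 (hn : 2 ≤ n) : Fin n := ⟨0, by omega⟩

def jf (hk : 1 ≤ k) (q : ℕ) : Fin k := ⟨q % k, Nat.mod_lt q hk⟩

def blockAt (hn : 2 ≤ n) (s : List (Fin n)) (st : ℕ) : Fin k → Fin n :=
  fun t => s.getD (st + (t : ℕ)) (d0 hn)

/-- the history `y^{g,j}↾(mk)` computed from the prefix `s = y↾(mk+j)`. -/
def hist (hn : 2 ≤ n) (hk : 1 ≤ k) (g : Gt n k) (s : List (Fin n)) : List (Fin 2) :=
  List.ofFn (fun q : Fin ((s.length / k) * k) =>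
    g (jf hk (q : ℕ)) (blockAt hn s (((q : ℕ) / k) * k + s.length % k)))

/-- evasion path of the predictor `pibar (g, j)` after history `hist g s`. -/
def Epath (hn : 2 ≤ n) (hk : 1 ≤ k) (pibar : Pib n k) (g : Gt n k) (s : List (Fin n)) :
    ℕ → List (Fin 2)
  | 0 => []
  | i+1 => Epath hn hk pibar g s i ++
      [flip2 (pibar (g, jf hk s.length) (hist hn hk g s ++ Epath hn hk pibar g s i))]

def pathAt (hn : 2 ≤ n) (hk : 1 ≤ k) (pibar : Pib n k) (g : Gt n k) (s : List (Fin n))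
    (i : ℕ) : Fin 2 :=
  flip2 (pibar (g, jf hk s.length) (hist hn hk g s ++ Epath hn hk pibar g s i))

lemma Epath_length (hn : 2 ≤ n) (hk : 1 ≤ k) (pibar : Pib n k) (g : Gt n k)
    (s : List (Fin n)) (i : ℕ) : (Epath hn hk pibar g s i).length = i := by
  induction i with
  | zero => rfl
  | succ i ih => simp [Epath, ih]

lemma Epath_eq_ofFn (hn : 2 ≤ n) (hk : 1 ≤ k) (pibar : Pib n k) (g : Gt n k)
    (s : List (Fin n)) (i : ℕ) :
    Epath hn hk pibar g s i
      = List.ofFn (fun t : Fin i => pathAt hn hk pibar g s (t : ℕ)) := by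
  induction i with
  | zero => rfl
  | succ i ih =>
    rw [List.ofFn_succ']
    show Epath hn hk pibar g s i ++ [pathAt hn hk pibar g s i] = _
    rw [ih, List.concat_eq_append]
    simp

open Classical in
noncomputable def Cand (hn : 2 ≤ n) (hk : 1 ≤ k) (pibar : Pib n k) (s : List (Fin n)) :
    Finset (Blk n k) :=
  Finset.univ.filter
    (fun b => ∀ g : Gt n k, ∃ i : Fin k, g i b ≠ pathAt hn hk pibar g s (i : ℕ))

lemma card_Cand_le (hn : 2 ≤ n) (hk : 1 ≤ k) (pibar : Pib n k) (s : List (Fin n)) :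
    (Cand hn hk pibar s).card ≤ 2 ^ k - 1 := by
  by_contra hcon
  push_neg at hcon
  have h2 : 2 ^ k ≤ (Cand hn hk pibar s).card := by
    have := Nat.one_le_two_pow (n := k); omega
  have hcard : Fintype.card (Fin k → Fin 2)
      ≤ Fintype.card {x // x ∈ Cand hn hk pibar s} := by
    simpa [Fintype.card_coe] using h2
  obtain ⟨ι⟩ := Function.Embedding.nonempty_of_card_le hcard
  classical
  let e : Blk n k → (Fin k → Fin 2) :=
    fun b => if h : ∃ u, ((ι u : {x // x ∈ Cand hn hk pibar s}) : Blk n k) = b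
      then h.choose else fun _ => 0
  have he : ∀ u, e ((ι u : {x // x ∈ Cand hn hk pibar s}) : Blk n k) = u := by
    intro u
    have hex : ∃ u', ((ι u' : {x // x ∈ Cand hn hk pibar s}) : Blk n k) = (ι u : _) := ⟨u, rfl⟩
    simp only [e, dif_pos hex]
    exact ι.injective (Subtype.coe_injective hex.choose_spec)
  set g : Gt n k := fun i b => e b i with hg
  set u0 : Fin k → Fin 2 := fun i => pathAt hn hk pibar g s (i : ℕ) with hu0
  have hmem : ((ι u0 : {x // x ∈ Cand hn hk pibar s}) : Blk n k) ∈ Cand hn hk pibar s :=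
    (ι u0).2
  unfold Cand at hmem
  rw [Finset.mem_filter] at hmem
  obtain ⟨i, hi⟩ := hmem.2 g
  apply hi
  exact congrFun (he u0) i


noncomputable def bestGuess (hn : 2 ≤ n) (T : Finset (Blk n k)) (d : Fin k) : Fin n :=
  (Finset.exists_max_image (Finset.univ : Finset (Fin n))
    (fun v => (T.filter (fun b => b d = v)).card)
    ⟨d0 hn, Finset.mem_univ _⟩).choose

lemma bestGuess_spec (hn : 2 ≤ n) (T : Finset (Blk n k)) (d : Fin k) (v : Fin n) :
    (T.filter (fun b => b d = v)).card
      ≤ (T.filter (fun b => b d = bestGuess hn T d)).card :=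
  (Finset.exists_max_image (Finset.univ : Finset (Fin n))
    (fun v => (T.filter (fun b => b d = v)).card)
    ⟨d0 hn, Finset.mem_univ _⟩).choose_spec.2 v (Finset.mem_univ v)

lemma halving (hn : 2 ≤ n) {T : Finset (Blk n k)} {d : Fin k} {b0 : Blk n k}
    (hne : bestGuess hn T d ≠ b0 d) :
    2 * (T.filter (fun b => b d = b0 d)).card ≤ T.card := by
  classical
  have h1 := bestGuess_spec hn T d (b0 d)
  have hdisj : Disjoint (T.filter (fun b => b d = b0 d))
      (T.filter (fun b => b d = bestGuess hn T d)) := by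
    rw [Finset.disjoint_left]
    intro b hb1 hb2
    rw [Finset.mem_filter] at hb1 hb2
    exact hne (hb2.2.symm.trans hb1.2)
  have hsub : (T.filter (fun b => b d = b0 d))
      ∪ (T.filter (fun b => b d = bestGuess hn T d)) ⊆ T :=
    Finset.union_subset (Finset.filter_subset _ _) (Finset.filter_subset _ _)
  have hcu : ((T.filter (fun b => b d = b0 d))
      ∪ (T.filter (fun b => b d = bestGuess hn T d))).card
      = (T.filter (fun b => b d = b0 d)).card
        + (T.filter (fun b => b d = bestGuess hn T d)).card :=
    Finset.card_union_of_disjoint hdisj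
  have hle := Finset.card_le_card hsub
  calc 2 * (T.filter (fun b => b d = b0 d)).card
      = (T.filter (fun b => b d = b0 d)).card
        + (T.filter (fun b => b d = b0 d)).card := two_mul _
    _ ≤ (T.filter (fun b => b d = b0 d)).card
        + (T.filter (fun b => b d = bestGuess hn T d)).card := Nat.add_le_add_left h1 _
    _ = _ := hcu.symm
    _ ≤ T.card := hle

open Classical in
noncomputable def surv (hn : 2 ≤ n) (hk : 1 ≤ k) (pibar : Pib n k)
    (s : List (Fin n)) (a : ℕ) : Finset (Blk n k) :=
  (Cand hn hk pibar (s.take a)).filter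
    (fun b => ∀ t : Fin k, a + (t : ℕ) < s.length → b t = s.getD (a + (t : ℕ)) (d0 hn))

noncomputable def guessFrom (hn : 2 ≤ n) (hk : 1 ≤ k) (pibar : Pib n k)
    (s : List (Fin n)) (a : ℕ) : Fin n :=
  bestGuess hn (surv hn hk pibar s a) ⟨(s.length - a) % k, Nat.mod_lt _ hk⟩

noncomputable def anchorR (hn : 2 ≤ n) (hk : 1 ≤ k) (pibar : Pib n k) :
    List (Fin n) → ℕ
  | [] => 0
  | v :: r =>
    let a := anchorR hn hk pibar r
    if v = guessFrom hn hk pibar r.reverse a ∨ k ≤ r.length + 1 - a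
      then r.length + 1 else a

noncomputable def anchor (hn : 2 ≤ n) (hk : 1 ≤ k) (pibar : Pib n k)
    (s : List (Fin n)) : ℕ :=
  anchorR hn hk pibar s.reverse

noncomputable def psi (hn : 2 ≤ n) (hk : 1 ≤ k) (pibar : Pib n k)
    (s : List (Fin n)) : Fin n :=
  guessFrom hn hk pibar s (anchor hn hk pibar s)

lemma anchor_nil (hn : 2 ≤ n) (hk : 1 ≤ k) (pibar : Pib n k) :
    anchor hn hk pibar [] = 0 := rfl

lemma anchor_snoc (hn : 2 ≤ n) (hk : 1 ≤ k) (pibar : Pib n k)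
    (s : List (Fin n)) (v : Fin n) :
    anchor hn hk pibar (s ++ [v])
      = if v = psi hn hk pibar s ∨ k ≤ s.length + 1 - anchor hn hk pibar s
          then s.length + 1 else anchor hn hk pibar s := by
  unfold anchor psi
  rw [List.reverse_append]
  show (if v = guessFrom hn hk pibar s.reverse.reverse (anchorR hn hk pibar s.reverse)
          ∨ k ≤ s.reverse.length + 1 - anchorR hn hk pibar s.reverse
        then s.reverse.length + 1 else anchorR hn hk pibar s.reverse) = _
  rw [List.reverse_reverse, List.length_reverse]
  rfl


lemma seg_length {y : ℕ → Fin n} {q : ℕ} : (seg y q).length = q := by simp [seg]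

lemma seg_zero {y : ℕ → Fin n} : seg y 0 = [] := rfl

lemma seg_snoc (y : ℕ → Fin n) (q : ℕ) : seg y (q + 1) = seg y q ++ [y q] := by
  unfold seg
  rw [List.ofFn_succ', List.concat_eq_append]
  simp

lemma seg_getElem (y : ℕ → Fin n) (q i : ℕ) (h : i < (seg y q).length) :
    (seg y q)[i] = y i := by
  unfold seg
  exact List.getElem_ofFn ..

lemma seg_getD (y : ℕ → Fin n) (q i : ℕ) (h : i < q) (d : Fin n) :
    (seg y q).getD i d = y i := by
  have h' : i < (seg y q).length := by rwa [seg_length]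
  rw [List.getD_eq_getElem _ _ h', seg_getElem]

lemma seg_take (y : ℕ → Fin n) (a q : ℕ) (h : a ≤ q) :
    (seg y q).take a = seg y a := by
  apply List.ext_getElem
  · simp [seg]; omega
  · intro i h1 h2
    rw [List.getElem_take, seg_getElem, seg_getElem]

lemma seg_append (y : ℕ → Fin n) (L i : ℕ) :
    seg y (L + i) = seg y L ++ List.ofFn (fun t : Fin i => y (L + (t : ℕ))) := by
  induction i with
  | zero => simp
  | succ i ih =>
    rw [← Nat.add_assoc, seg_snoc, ih, List.ofFn_succ', List.concat_eq_append]
    simp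

section Dyn

variable (hn : 2 ≤ n) (hk : 1 ≤ k) (pibar : Pib n k) (y : ℕ → Fin n)

noncomputable def Ay (q : ℕ) : ℕ := anchor hn hk pibar (seg y q)

noncomputable def Gy (q : ℕ) : Fin n := psi hn hk pibar (seg y q)

lemma Ay_zero : Ay hn hk pibar y 0 = 0 := rfl

lemma Ay_succ (q : ℕ) :
    Ay hn hk pibar y (q + 1)
      = if y q = Gy hn hk pibar y q ∨ k ≤ q + 1 - Ay hn hk pibar y q
          then q + 1 else Ay hn hk pibar y q := by
  unfold Ay Gy
  rw [seg_snoc, anchor_snoc, seg_length]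

lemma Ay_le (q : ℕ) : Ay hn hk pibar y q ≤ q ∧ q - Ay hn hk pibar y q < k := by
  induction q with
  | zero => rw [Ay_zero]; omega
  | succ q ih =>
    rw [Ay_succ]
    split_ifs with h
    · omega
    · have h2 : ¬ (k ≤ q + 1 - Ay hn hk pibar y q) := fun hh => h (Or.inr hh)
      omega

lemma stepback {q : ℕ} (h : Ay hn hk pibar y (q + 1) ≤ q) :
    Ay hn hk pibar y (q + 1) = Ay hn hk pibar y q
      ∧ y q ≠ Gy hn hk pibar y q ∧ q + 1 - Ay hn hk pibar y q < k := by
  rw [Ay_succ] at h ⊢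
  split_ifs at h ⊢ with hc
  · omega
  · push_neg at hc
    exact ⟨rfl, hc.1, by omega⟩

lemma backprop : ∀ p r : ℕ, Ay hn hk pibar y p ≤ r → r ≤ p →
    Ay hn hk pibar y r = Ay hn hk pibar y p
      ∧ ∀ u, r ≤ u → u < p → y u ≠ Gy hn hk pibar y u := by
  intro p
  induction p with
  | zero =>
    intro r h1 h2
    have : r = 0 := by omega
    subst this
    exact ⟨rfl, by omega⟩
  | succ p ih =>
    intro r h1 h2
    rcases eq_or_lt_of_le h2 with rfl | h2'
    · exact ⟨rfl, by omega⟩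
    · have hr : r ≤ p := by omega
      have hA : Ay hn hk pibar y (p + 1) ≤ p := le_trans h1 hr
      have hb := stepback hn hk pibar y hA
      have hih := ih r (hb.1 ▸ h1) hr
      refine ⟨hih.1.trans hb.1.symm, ?_⟩
      intro u hu1 hu2
      rcases eq_or_lt_of_le (Nat.lt_succ_iff.1 hu2) with rfl | hu
      · exact hb.2.1
      · exact hih.2 u hu1 hu

lemma forward {r a : ℕ} (hA : Ay hn hk pibar y r = a)
    (hw : y r ≠ Gy hn hk pibar y r) (hlt : r + 1 - a < k) :
    Ay hn hk pibar y (r + 1) = a := by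
  rw [Ay_succ, hA, if_neg]
  push_neg
  exact ⟨hw, by omega⟩

end Dyn


def xf (hk : 1 ≤ k) (y : ℕ → Fin n) (g : Gt n k) (j : Fin k) : ℕ → Fin 2 :=
  fun a => g ⟨a % k, Nat.mod_lt a hk⟩
    (fun t : Fin k => y (a / k * k + (j : ℕ) + (t : ℕ)))

lemma xf_eval (hk : 1 ≤ k) (y : ℕ → Fin n) (g : Gt n k) (j : Fin k)
    (mm t : ℕ) (ht : t < k) :
    xf hk y g j (mm * k + t)
      = g ⟨t, ht⟩ (fun t' : Fin k => y (mm * k + (j : ℕ) + (t' : ℕ))) := by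
  have hmod : (mm * k + t) % k = t := by
    rw [Nat.mul_comm mm k, Nat.mul_add_mod]
    exact Nat.mod_eq_of_lt ht
  have hdiv : (mm * k + t) / k = mm := by
    rw [Nat.mul_comm mm k, Nat.mul_add_div hk]
    simp [Nat.div_eq_of_lt ht]
  unfold xf
  rw [show ((mm * k + t) / k) = mm from hdiv]
  congr 1
  exact Fin.ext hmod

lemma hist_eq (hn : 2 ≤ n) (hk : 1 ≤ k) (y : ℕ → Fin n) (g : Gt n k) (q : ℕ) :
    hist hn hk g (seg y q) = seg (xf hk y g (jf hk q)) (q / k * k) := by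
  apply List.ext_getElem
  · simp [hist, seg]
  · intro p h1 h2
    have hp : p < q / k * k := by simpa [hist, seg] using h1
    rw [seg_getElem]
    unfold hist
    erw [List.getElem_ofFn]
    unfold xf blockAt jf
    congr 1
    funext t
    show (seg y q).getD (p / k * k + (seg y q).length % k + (t : ℕ)) (d0 hn)
        = y (p / k * k + q % k + (t : ℕ))
    rw [show (seg y q).length = q from seg_length]
    have h3 : p / k < q / k := (Nat.div_lt_iff_lt_mul hk).2 hp
    have h4 : (p / k + 1) * k ≤ (q / k) * k := Nat.mul_le_mul_right k h3
    have h4' : p / k * k + k ≤ q / k * k := by rw [Nat.add_mul, one_mul] at h4; exact h4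
    have h5 : q / k * k + q % k = q := Nat.div_add_mod' q k
    have ht := t.2
    rw [seg_getD y q (p / k * k + q % k + (t : ℕ)) (by omega)]

lemma mem_Cand (hn : 2 ≤ n) (hk : 1 ≤ k) (pibar : Pib n k) (y : ℕ → Fin n)
    (Hy : ∀ (g : Gt n k) (j : Fin k), WPred k (pibar (g, j)) (xf hk y g j)) :
    ∃ N, ∀ q, N ≤ q →
      (fun t : Fin k => y (q + (t : ℕ))) ∈ Cand hn hk pibar (seg y q) := by
  classical
  refine ⟨(Finset.univ.sup (fun p : Gt n k × Fin k => (Hy p.1 p.2).choose) + 1) * k, ?_⟩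
  intro q hq
  have hmq : ∀ p : Gt n k × Fin k, (Hy p.1 p.2).choose ≤ q / k := by
    intro p
    have h1 : (Hy p.1 p.2).choose
        ≤ Finset.univ.sup (fun p : Gt n k × Fin k => (Hy p.1 p.2).choose) :=
      Finset.le_sup (f := fun p : Gt n k × Fin k => (Hy p.1 p.2).choose)
        (Finset.mem_univ p)
    have h2 : Finset.univ.sup (fun p : Gt n k × Fin k => (Hy p.1 p.2).choose) + 1 ≤ q / k :=
      (Nat.le_div_iff_mul_le hk).2 hq
    omega
  unfold Cand
  rw [Finset.mem_filter]
  refine ⟨Finset.mem_univ _, ?_⟩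
  intro g
  by_contra hcon
  push_neg at hcon
  obtain ⟨i, hik, heq⟩ := (Hy g (jf hk q)).choose_spec (q / k) (hmq (g, jf hk q))
  have hqq : q / k * k + ((jf hk q : Fin k) : ℕ) = q := Nat.div_add_mod' q k
  have hblk : (fun t' : Fin k => y (q / k * k + ((jf hk q : Fin k) : ℕ) + (t' : ℕ)))
      = fun t : Fin k => y (q + (t : ℕ)) := by
    funext t'
    rw [hqq]
  have hseg : seg (xf hk y g (jf hk q)) (q / k * k + i)
      = hist hn hk g (seg y q) ++ Epath hn hk pibar g (seg y q) i := by
    rw [seg_append, ← hist_eq hn hk y g q, Epath_eq_ofFn hn hk pibar g (seg y q) i]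
    congr 1
    apply congrArg
    funext t
    rw [xf_eval hk y g (jf hk q) (q / k) (t : ℕ) (Nat.lt_trans t.2 hik), hblk]
    exact hcon ⟨(t : ℕ), Nat.lt_trans t.2 hik⟩
  have hxi : xf hk y g (jf hk q) (q / k * k + i)
      = pathAt hn hk pibar g (seg y q) i := by
    rw [xf_eval hk y g (jf hk q) (q / k) i hik, hblk]
    exact hcon ⟨i, hik⟩
  have hpa : pathAt hn hk pibar g (seg y q) i
      = flip2 (pibar (g, jf hk q)
          (hist hn hk g (seg y q) ++ Epath hn hk pibar g (seg y q) i)) := by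
    unfold pathAt
    rw [seg_length]
  rw [hseg] at heq
  exact flip2_ne _ (by rw [← hpa, ← hxi, heq])


open Classical in
noncomputable def TT (hn : 2 ≤ n) (hk : 1 ≤ k) (pibar : Pib n k) (y : ℕ → Fin n)
    (a r : ℕ) : Finset (Blk n k) :=
  (Cand hn hk pibar (seg y a)).filter
    (fun b => ∀ t : Fin k, a + (t : ℕ) < r → b t = y (a + (t : ℕ)))

lemma surv_eq (hn : 2 ≤ n) (hk : 1 ≤ k) (pibar : Pib n k) (y : ℕ → Fin n)
    (a r : ℕ) (har : a ≤ r) :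
    surv hn hk pibar (seg y r) a = TT hn hk pibar y a r := by
  classical
  unfold surv TT
  rw [seg_take y a r har]
  apply Finset.filter_congr
  intro b _
  rw [seg_length]
  constructor
  · intro h t ht
    rw [← seg_getD y r (a + (t : ℕ)) ht (d0 hn)]
    exact h t ht
  · intro h t ht
    rw [seg_getD y r (a + (t : ℕ)) ht (d0 hn)]
    exact h t ht

lemma TT_succ (hn : 2 ≤ n) (hk : 1 ≤ k) (pibar : Pib n k) (y : ℕ → Fin n)
    (a d : ℕ) (hd : d < k) :
    TT hn hk pibar y a (a + d + 1)
      = (TT hn hk pibar y a (a + d)).filter (fun b => b ⟨d, hd⟩ = y (a + d)) := by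
  classical
  unfold TT
  rw [Finset.filter_filter]
  apply Finset.filter_congr
  intro b _
  constructor
  · intro h
    refine ⟨fun t ht => h t (by omega), ?_⟩
    have := h ⟨d, hd⟩ (by simp)
    simpa using this
  · rintro ⟨h1, h2⟩ t ht
    rcases lt_or_ge (a + (t : ℕ)) (a + d) with h | h
    · exact h1 t h
    · have htd : (t : ℕ) = d := by omega
      have : t = ⟨d, hd⟩ := Fin.ext htd
      rw [this]
      simpa [htd] using h2

lemma main (hn : 2 ≤ n) (hk : 1 ≤ k) (pibar : Pib n k) (y : ℕ → Fin n)
    (Hy : ∀ (g : Gt n k) (j : Fin k), WPred k (pibar (g, j)) (xf hk y g j)) :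
    ∃ N, ∀ m, N ≤ m → ∃ i, m ≤ i ∧ i < m + k ∧ y i = psi hn hk pibar (seg y i) := by
  classical
  obtain ⟨N, hN⟩ := mem_Cand hn hk pibar y Hy
  refine ⟨N + k, ?_⟩
  intro m hm
  by_contra hall
  push_neg at hall
  set a := Ay hn hk pibar y m with ha
  have hAle := Ay_le hn hk pibar y m
  have haN : N ≤ a := by omega
  have hback := backprop hn hk pibar y m a le_rfl hAle.1
  have hwrong : ∀ d, d < k → y (a + d) ≠ Gy hn hk pibar y (a + d) := by
    intro d hd
    rcases lt_or_ge (a + d) m with h | h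
    · exact hback.2 (a + d) (by omega) h
    · exact hall (a + d) h (by omega)
  have hA : ∀ d, d < k → Ay hn hk pibar y (a + d) = a := by
    intro d
    induction d with
    | zero => intro _; simpa using hback.1
    | succ d ih =>
      intro hd1
      have hd : d < k := by omega
      exact forward hn hk pibar y (ih hd) (hwrong d hd) (show a + d + 1 - a < k by omega)
  have hstep : ∀ d, d < k →
      2 * (TT hn hk pibar y a (a + d + 1)).card
        ≤ (TT hn hk pibar y a (a + d)).card := by
    intro d hd
    have hanch : anchor hn hk pibar (seg y (a + d)) = a := hA d hd
    have hGy : Gy hn hk pibar y (a + d)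
        = bestGuess hn (TT hn hk pibar y a (a + d)) ⟨d, hd⟩ := by
      unfold Gy psi guessFrom
      rw [hanch, surv_eq hn hk pibar y a (a + d) (by omega)]
      congr 1
      apply Fin.ext
      show ((seg y (a + d)).length - a) % k = d
      have h1 : a + d - a = d := by omega
      rw [seg_length, h1, Nat.mod_eq_of_lt hd]
    have hne : bestGuess hn (TT hn hk pibar y a (a + d)) ⟨d, hd⟩
        ≠ (fun _ : Fin k => y (a + d)) ⟨d, hd⟩ := by
      rw [← hGy]
      exact Ne.symm (hwrong d hd)
    rw [TT_succ hn hk pibar y a d hd]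
    exact halving hn (b0 := fun _ : Fin k => y (a + d)) hne
  have hbstar : ∀ r, (fun t : Fin k => y (a + (t : ℕ))) ∈ TT hn hk pibar y a r := by
    intro r
    unfold TT
    rw [Finset.mem_filter]
    exact ⟨hN a haN, fun t _ => rfl⟩
  have hchain : ∀ d, d ≤ k →
      2 ^ d * (TT hn hk pibar y a (a + d)).card ≤ (TT hn hk pibar y a a).card := by
    intro d
    induction d with
    | zero => intro _; simp
    | succ d ih =>
      intro hd1
      have hd : d < k := by omega
      have h1 := hstep d hd
      have h2 := ih (by omega)
      have h3 : 2 ^ (d + 1) * (TT hn hk pibar y a (a + (d + 1))).card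
          = 2 ^ d * (2 * (TT hn hk pibar y a (a + d + 1)).card) := by
        rw [show a + (d + 1) = a + d + 1 from rfl]
        ring
      rw [h3]
      exact le_trans (Nat.mul_le_mul_left _ h1) h2
  have hfinal := hchain k le_rfl
  have hcard : (TT hn hk pibar y a a).card ≤ 2 ^ k - 1 := by
    refine le_trans ?_ (card_Cand_le hn hk pibar (seg y a))
    exact Finset.card_filter_le _ _
  have hpos : 1 ≤ (TT hn hk pibar y a (a + k)).card :=
    Finset.card_pos.2 ⟨_, hbstar (a + k)⟩
  have h2k : 1 ≤ 2 ^ k := Nat.one_le_two_pow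
  have hmul : 2 ^ k ≤ 2 ^ k * (TT hn hk pibar y a (a + k)).card :=
    Nat.le_mul_of_pos_right _ hpos
  omega

end Main

end Stmt0Aux


/-- Theorem 1.1 (main combinatorial lemma): there is a map sending each family
`π̄ = ⟨π^{ḡ,j} : (ḡ,j) ∈ G × k⟩` of predictors on `2^{<ω}` to a predictor `ψ_{π̄}` on `n^{<ω}`
such that whenever each `π^{ḡ,j}` weakly k-constantly predicts `y^{ḡ,j}`,
the predictor `ψ_{π̄}` k-constantly predicts `y`. -/
theorem stmt0 (n k : ℕ) (hn : 2 ≤ n) (hk : 1 ≤ k) :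
    ∃ Ψ : (((Fin k → ((Fin k → Fin n) → Fin 2)) × Fin k) → (List (Fin 2) → Fin 2)) →
          (List (Fin n) → Fin n),
      ∀ pibar : ((Fin k → ((Fin k → Fin n) → Fin 2)) × Fin k) → (List (Fin 2) → Fin 2),
        ∀ y : ℕ → Fin n,
          (∀ g : Fin k → ((Fin k → Fin n) → Fin 2), ∀ j : Fin k,
            WPred k (pibar (g, j))
              (fun a : ℕ => g ⟨a % k, Nat.mod_lt a hk⟩
                (fun t : Fin k => y (a / k * k + (j : ℕ) + (t : ℕ))))) →
          KPred k (Ψ pibar) y := by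
  refine ⟨fun pibar => Stmt0Aux.psi hn hk pibar, ?_⟩
  intro pibar y Hy
  exact Stmt0Aux.main hn hk pibar y Hy
end

section
/- Fix natural numbers n ≥ 2 and k ≥ 1, let G be the set of all k-tuples ḡ = ⟨g_i : i < k⟩ of functions g_i : n^k → 2, and fix a family π̄ = ⟨π^{ḡ,j} : (ḡ,j) ∈ G × k⟩ of predictors π^{ḡ,j} : 2^{<ω} → 2. For σ ∈ n^{<ω} with |σ| = mk + j where j < k, and for τ ∈ n^{<ω} extending σ with |τ| = |σ| + k, define τ^{ḡ,j} ∈ 2^{(m+1)k} by τ^{ḡ,j}(m'k + i) = g_i(τ↾[m'k+j, (m'+1)k+j)) for m' ≤ m and i < k. Let A_σ^k be the set of all τ ∈ n^{<ω} extending σ with |τ| = |σ| + k such that for every ḡ ∈ G there exists i < k with τ^{ḡ,j}(mk + i) = π^{ḡ,j}(τ^{ḡ,j}↾(mk + i)). Then |A_σ^k| < 2^k for every σ ∈ n^{<ω}. -/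
open Cardinal

def evade (P : List (Fin 2) → Fin 2) (i : ℕ) : Fin 2 :=
  1 - P (List.ofFn (fun q : Fin i => evade P q))
termination_by i
decreasing_by exact q.isLt

lemma evade_ne (P : List (Fin 2) → Fin 2) (i : ℕ) :
    evade P i ≠ P (List.ofFn (fun q : Fin i => evade P q)) := by
  rw [evade]
  generalize P (List.ofFn (fun q : Fin i => evade P q)) = x
  revert x; decide

/-- The Claim in Theorem 1.1: `|A_σ^k| < 2^k` for every `σ ∈ n^{<ω}`. -/
theorem stmt1 (n k : ℕ) (hn : 2 ≤ n) (hk : 1 ≤ k)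
    (pibar : ((Fin k → ((Fin k → Fin n) → Fin 2)) × Fin k) → (List (Fin 2) → Fin 2))
    (σ : List (Fin n)) :
    let m := σ.length / k
    let j := σ.length % k
    -- `trans τ g p` is the value `τ^{ḡ,j}(p)` (for `p < (m+1)k`, writing `p = m'k + i`, it is
    -- `g_i (τ↾[m'k+j, (m'+1)k+j))`)
    let trans : List (Fin n) → (Fin k → ((Fin k → Fin n) → Fin 2)) → ℕ → Fin 2 :=
      fun τ g p => g ⟨p % k, Nat.mod_lt p hk⟩
        (fun t : Fin k => τ.getD (p / k * k + j + (t : ℕ)) ⟨0, by omega⟩)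
    let A : Set (List (Fin n)) :=
      { τ | σ <+: τ ∧ τ.length = σ.length + k ∧
        ∀ g : Fin k → ((Fin k → Fin n) → Fin 2), ∃ i, i < k ∧
          trans τ g (m * k + i) =
            pibar (g, ⟨j, Nat.mod_lt _ hk⟩)
              (List.ofFn (fun q : Fin (m * k + i) => trans τ g q)) }
    A.Finite ∧ A.ncard < 2 ^ k := by
  intro m j trans A
  have hn0 : 0 < n := by omega
  have hlen : σ.length = m * k + j := by
    rw [Nat.mul_comm m k]; exact (Nat.div_add_mod σ.length k).symm
  have htrans : trans = fun τ' g' p => g' ⟨p % k, Nat.mod_lt p hk⟩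
      (fun t : Fin k => τ'.getD (p / k * k + j + (t : ℕ)) ⟨0, hn0⟩) := rfl
  have tail_spec : ∀ τ ∈ A,
      τ = σ ++ List.ofFn (fun i : Fin k => τ.getD (σ.length + (i : ℕ)) ⟨0, hn0⟩) := by
    rintro τ ⟨⟨s, hs⟩, hlen2, -⟩
    have hsl : s.length = k := by
      have := congrArg List.length hs
      simp at this; omega
    rw [← hs]
    congr 1
    apply List.ext_getElem
    · simp [hsl]
    · intro p h1 h2
      simp only [List.getElem_ofFn]
      show s[p] = (σ ++ s).getD (σ.length + p) ⟨0, hn0⟩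
      rw [List.getD_append_right _ _ _ _ (Nat.le_add_right _ _), Nat.add_sub_cancel_left,
        List.getD_eq_getElem _ _ h1]
  have hAfin : A.Finite := by
    apply Set.Finite.subset (Set.finite_range
      (fun f : Fin k → Fin n => σ ++ List.ofFn f))
    intro τ hτ
    exact ⟨fun i => τ.getD (σ.length + (i : ℕ)) ⟨0, hn0⟩, (tail_spec τ hτ).symm⟩
  refine ⟨hAfin, ?_⟩
  by_contra hcon
  push_neg at hcon
  set tf : List (Fin n) → (Fin k → Fin n) :=
    fun τ i => τ.getD (σ.length + (i : ℕ)) ⟨0, hn0⟩ with htf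
  have hinj : Set.InjOn tf A := by
    intro τ1 h1 τ2 h2 he
    rw [tail_spec τ1 h1, tail_spec τ2 h2]
    have : (fun i : Fin k => τ1.getD (σ.length + (i : ℕ)) ⟨0, hn0⟩)
        = (fun i : Fin k => τ2.getD (σ.length + (i : ℕ)) ⟨0, hn0⟩) := he
    rw [this]
  have hT : 2 ^ k ≤ (tf '' A).ncard := by
    rwa [Set.ncard_image_of_injOn hinj]
  obtain ⟨S, hST, hScard⟩ := Set.exists_subset_card_eq hT
  have hSfin : S.Finite := (hAfin.image tf).subset hST
  have hFcard : hSfin.toFinset.card = 2 ^ k := by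
    rw [← Set.ncard_eq_toFinset_card S hSfin]; exact hScard
  have E : ↥hSfin.toFinset ≃ (Fin k → Fin 2) :=
    Fintype.equivOfCardEq (by
      simp [Fintype.card_coe, hFcard, Fintype.card_fun])
  set g : Fin k → ((Fin k → Fin n) → Fin 2) :=
    fun i t => if h : t ∈ hSfin.toFinset then E ⟨t, h⟩ i else 0 with hg
  set P : List (Fin 2) → Fin 2 :=
    fun l => pibar (g, ⟨j, Nat.mod_lt σ.length hk⟩)
      (List.ofFn (fun q : Fin (m * k) => trans σ g q) ++ l) with hP
  obtain ⟨⟨t0, ht0⟩, hEt0⟩ := E.surjective (fun i : Fin k => evade P (i : ℕ))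
  have ht0S : t0 ∈ S := hSfin.mem_toFinset.mp ht0
  obtain ⟨τ, hτA, hτt⟩ := hST ht0S
  obtain ⟨hpre, hlen2, hpred⟩ := hτA
  obtain ⟨i, hik, heq⟩ := hpred g
  have hmod : ∀ i', i' < k → (m * k + i') % k = i' := by
    intro i' h
    rw [Nat.mul_comm, Nat.mul_add_mod, Nat.mod_eq_of_lt h]
  have hdiv : ∀ i', i' < k → (m * k + i') / k = m := by
    intro i' h
    rw [Nat.mul_comm, Nat.mul_add_div hk, Nat.div_eq_of_lt h, Nat.add_zero]
  have trans_hi : ∀ (τ' : List (Fin n)) (i' : ℕ) (h : i' < k),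
      trans τ' g (m * k + i') = g ⟨i', h⟩ (tf τ') := by
    intro τ' i' h
    simp only [htrans, htf, hmod i' h, hdiv i' h]
    congr 1
    funext t
    congr 1
    omega
  have trans_lo : ∀ τ' ∈ A, ∀ q, q < m * k → trans τ' g q = trans σ g q := by
    rintro τ' ⟨⟨s, hs⟩, -, -⟩ q hq
    simp only [htrans]
    congr 1
    funext t
    have h1 : q / k < m := (Nat.div_lt_iff_lt_mul hk).mpr (by omega)
    have h3 : q / k * k + k = (q / k + 1) * k := by ring
    have h2 : (q / k + 1) * k ≤ m * k := Nat.mul_le_mul_right k h1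
    have hidx : q / k * k + j + (t : ℕ) < σ.length := by
      have := t.isLt; omega
    rw [← hs, List.getD_append _ _ _ _ hidx]
  have hsplit : List.ofFn (fun q : Fin (m * k + i) => trans τ g (q : ℕ)) =
      List.ofFn (fun q : Fin (m * k) => trans σ g (q : ℕ)) ++
        List.ofFn (fun q : Fin i => evade P (q : ℕ)) := by
    rw [List.ofFn_add]
    congr 1
    · congr 1
      funext q
      show trans τ g (q : ℕ) = trans σ g (q : ℕ)
      exact trans_lo τ ⟨hpre, hlen2, hpred⟩ q q.isLt
    · congr 1
      funext q
      simp only [Fin.coe_natAdd]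
      have hqk : (q : ℕ) < k := by have := q.isLt; omega
      rw [trans_hi τ (q : ℕ) hqk, hτt]
      simp only [hg]
      rw [dif_pos ht0, hEt0]
  have h1 : trans τ g (m * k + i) = evade P i := by
    rw [trans_hi τ i hik, hτt]
    simp only [hg]
    rw [dif_pos ht0, hEt0]
  apply evade_ne P i
  rw [← h1, heq, hsplit]
end

section
/- For all natural numbers n ≥ 2 and k ≥ 1: 𝔳_n^const(k) ≤ 𝔳̄_2^const(k). That is, if Π is a set of predictors π : 2^{<ω} → 2 such that every x ∈ 2^ω is weakly k-constantly predicted by some member of Π, then there is a set Ψ of predictors ψ : n^{<ω} → n with |Ψ| ≤ max(|Π|, ℵ₀) such that every y ∈ n^ω is k-constantly predicted by some member of Ψ; consequently the least cardinality of a family of predictors k-constantly predicting all of n^ω is at most the least cardinality of a family of predictors weakly k-constantly predicting all of 2^ω. -/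
open Cardinal

namespace S2

abbrev P2 := List (Fin 2) → Fin 2

def negFin (b : Fin 2) : Fin 2 := if b = 0 then 1 else 0

lemma negFin_ne (b : Fin 2) : negFin b ≠ b := by
  fin_cases b <;> simp [negFin]

variable {n k : ℕ}

def eqFin (a b : Fin n) : Fin 2 := if a = b then 1 else 0

def subq (a : Fin n) (q : List (Fin n) → Fin n) : List (Fin n) → Fin n := fun h => q (a :: h)

def pattern : (List (Fin n) → Fin n) → List (Fin n) → List (Fin 2)
  | _, [] => []
  | q, a :: Y => eqFin a (q []) :: pattern (subq a q) Y

def Dodge : List (Fin n) → (List (Fin n) → Fin n) → Prop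
  | [], _ => True
  | a :: Y, w => a ≠ w [] ∧ Dodge Y (subq a w)

lemma pattern_length (q : List (Fin n) → Fin n) (Y : List (Fin n)) :
    (pattern q Y).length = Y.length := by
  induction Y generalizing q with
  | nil => rfl
  | cons a Y ih => simp [pattern, ih]

lemma pattern_congr (Y : List (Fin n)) (q q' : List (Fin n) → Fin n)
    (h : ∀ l : List (Fin n), l.length < Y.length → q l = q' l) :
    pattern q Y = pattern q' Y := by
  induction Y generalizing q q' with
  | nil => rfl
  | cons a Y ih =>
      simp only [pattern]
      rw [h [] (by simp)]
      rw [ih (subq a q) (subq a q') (fun l hl => h (a :: l) (by simpa using Nat.succ_lt_succ hl))]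

lemma pattern_getElem (Y : List (Fin n)) (q : List (Fin n) → Fin n) (i : ℕ)
    (h : i < Y.length) (h2 : i < (pattern q Y).length) :
    (pattern q Y)[i] = eqFin (Y[i]) (q (Y.take i)) := by
  induction Y generalizing q i with
  | nil => simp at h
  | cons a Y ih =>
      cases i with
      | zero => simp [pattern]
      | succ i =>
          simp only [pattern, List.getElem_cons_succ, List.take_succ_cons]
          rw [ih (subq a q) i (by simpa using h) (by rw [pattern_length]; simpa using h)]
          rfl

lemma dodge_of (Y : List (Fin n)) (w : List (Fin n) → Fin n)
    (h : ∀ i (hi : i < Y.length), Y[i] ≠ w (Y.take i)) : Dodge Y w := by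
  induction Y generalizing w with
  | nil => trivial
  | cons a Y ih =>
      refine ⟨h 0 (by simp), ih _ (fun i hi => ?_)⟩
      have := h (i+1) (by simpa using Nat.succ_lt_succ hi)
      simpa [subq] using this

theorem game_exists [NeZero n] : ∀ (k : ℕ) (B : (List (Fin n) → Fin n) → List (Fin 2)),
    (∀ q, (B q).length = k) →
    ∃ w : List (Fin n) → Fin n, ∀ Y : List (Fin n), Y.length = k → Dodge Y w →
      ∃ q, pattern q Y = B q := by
  intro k
  induction k with
  | zero =>
      intro B hB
      refine ⟨fun _ => 0, fun Y hY _ => ⟨fun _ => 0, ?_⟩⟩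
      have h1 : Y = [] := List.length_eq_zero_iff.mp hY
      have h2 : B (fun _ => 0) = [] := List.length_eq_zero_iff.mp (hB _)
      subst h1
      rw [h2]
      rfl
  | succ k ih =>
      intro B hB
      classical
      set Bad : Fin n → Prop := fun u => ∃ r, ∀ q, ¬ (subq u q = r ∧ B q = eqFin u (q []) :: (B q).tail) with hBadDef
      have bad_unique : ∀ u₁ u₂, Bad u₁ → Bad u₂ → u₁ = u₂ := by
        intro u₁ u₂ hb1 hb2
        obtain ⟨r₁, h1⟩ := hb1
        obtain ⟨r₂, h2⟩ := hb2
        by_contra hne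
        set q₀ : List (Fin n) → Fin n := fun l => match l with
          | [] => u₁
          | a :: h => if a = u₁ then r₁ h else if a = u₂ then r₂ h else 0 with hq₀
        have hq0nil : q₀ [] = u₁ := rfl
        have hs1 : subq u₁ q₀ = r₁ := funext fun h => by simp [subq, q₀]
        have hs2 : subq u₂ q₀ = r₂ := funext fun h => by
          simp [subq, q₀, Ne.symm hne]
        have hlen : (B q₀).length = k + 1 := hB _
        obtain ⟨b, t, hbt⟩ : ∃ b t, B q₀ = b :: t := by
          cases hBq : B q₀ with
          | nil => rw [hBq] at hlen; simp at hlen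
          | cons b t => exact ⟨b, t, rfl⟩
        have htail : (B q₀).tail = t := by rw [hbt]; rfl
        have hb01 : b = 0 ∨ b = 1 := by fin_cases b <;> simp
        rcases hb01 with hb | hb
        · refine h2 q₀ ⟨hs2, ?_⟩
          rw [hbt, hq0nil]
          simp [eqFin, Ne.symm hne, hb]
        · refine h1 q₀ ⟨hs1, ?_⟩
          rw [hbt, hq0nil]
          simp [eqFin, hb]
      have hex : ∀ u : Fin n, ¬ Bad u → ∀ r, ∃ q, subq u q = r ∧ B q = eqFin u (q []) :: (B q).tail := by
        intro u hu r
        by_contra hc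
        exact hu ⟨r, fun q hq => hc ⟨q, hq⟩⟩
      set ustar : Fin n := if h : ∃ u, Bad u then h.choose else 0 with hustar
      have hgood : ∀ u, u ≠ ustar → ∀ r, ∃ q, subq u q = r ∧ B q = eqFin u (q []) :: (B q).tail := by
        intro u hu
        apply hex
        intro hbadu
        apply hu
        have hexu : ∃ u, Bad u := ⟨u, hbadu⟩
        rw [hustar, dif_pos hexu]
        exact bad_unique u _ hbadu hexu.choose_spec
      have hchoice : ∀ (u : Fin n) (r : List (Fin n) → Fin n), ∃ q,
          u ≠ ustar → (subq u q = r ∧ B q = eqFin u (q []) :: (B q).tail) := by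
        intro u r
        by_cases hu : u = ustar
        · exact ⟨fun _ => 0, fun h => absurd hu h⟩
        · obtain ⟨q, hq⟩ := hgood u hu r
          exact ⟨q, fun _ => hq⟩
      choose Qc hQc using hchoice
      set B' : Fin n → (List (Fin n) → Fin n) → List (Fin 2) := fun u r => (B (Qc u r)).tail with hB'
      have hB'len : ∀ u r, ((B' u) r).length = k := by
        intro u r
        rw [hB']
        simp only []
        rw [List.length_tail, hB]
        omega
      choose wsub hwsub using fun u : Fin n => ih (B' u) (hB'len u)
      refine ⟨fun l => match l with | [] => ustar | a :: h => wsub a h, ?_⟩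
      intro Y hY hD
      obtain ⟨a, Y', rfl⟩ : ∃ a Y', Y = a :: Y' := by
        cases Y with
        | nil => simp at hY
        | cons a Y' => exact ⟨a, Y', rfl⟩
      obtain ⟨ha, hd'⟩ := hD
      have ha' : a ≠ ustar := ha
      have hY' : Y'.length = k := by simpa using hY
      have hsubw : subq a (fun l => match l with | [] => ustar | a :: h => wsub a h) = wsub a :=
        funext fun h => rfl
      rw [hsubw] at hd'
      obtain ⟨r, hr⟩ := hwsub a Y' hY' hd'
      obtain ⟨h1, h2⟩ := hQc a r ha'
      refine ⟨Qc a r, ?_⟩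
      calc pattern (Qc a r) (a :: Y')
          = eqFin a ((Qc a r) []) :: pattern (subq a (Qc a r)) Y' := rfl
        _ = eqFin a ((Qc a r) []) :: (B (Qc a r)).tail := by rw [h1, hr]
        _ = B (Qc a r) := h2.symm

/-! ### gameW -/

open Classical in
noncomputable def gameW [NeZero n] (k : ℕ) (B : (List (Fin n) → Fin n) → List (Fin 2)) :
    List (Fin n) → Fin n :=
  if h : ∀ q, (B q).length = k then (game_exists k B h).choose else fun _ => 0

lemma gameW_spec [NeZero n] (k : ℕ) (B : (List (Fin n) → Fin n) → List (Fin 2))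
    (h : ∀ q, (B q).length = k) (Y : List (Fin n)) (hY : Y.length = k)
    (hD : Dodge Y (gameW k B)) : ∃ q, pattern q Y = B q := by
  rw [gameW, dif_pos h] at hD
  exact (game_exists k B h).choose_spec Y hY hD

/-! ### anti strings -/

def antiL (π : P2) (base : List (Fin 2)) : ℕ → List (Fin 2)
  | 0 => []
  | i+1 => antiL π base i ++ [negFin (π (base ++ antiL π base i))]

lemma antiL_length (π : P2) (base : List (Fin 2)) (i : ℕ) : (antiL π base i).length = i := by
  induction i with
  | zero => rfl
  | succ i ih => simp [antiL, ih]

lemma antiL_take (π : P2) (base : List (Fin 2)) {i j : ℕ} (h : i ≤ j) :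
    (antiL π base j).take i = antiL π base i := by
  induction j with
  | zero =>
      have : i = 0 := by omega
      subst this; rfl
  | succ j ih =>
      have hstep : antiL π base (j+1) = antiL π base j ++ [negFin (π (base ++ antiL π base j))] := rfl
      rcases Nat.lt_or_ge i (j+1) with h' | h'
      · rw [hstep, List.take_append_of_le_length (by rw [antiL_length]; omega)]
        exact ih (by omega)
      · have : i = j + 1 := by omega
        subst this
        rw [List.take_of_length_le (by rw [antiL_length])]

lemma antiL_getElem (π : P2) (base : List (Fin 2)) {i j : ℕ} (h : i < j)
    (hh : i < (antiL π base j).length) :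
    (antiL π base j)[i] = negFin (π (base ++ antiL π base i)) := by
  induction j with
  | zero => omega
  | succ j ih =>
      have hstep : antiL π base (j+1) = antiL π base j ++ [negFin (π (base ++ antiL π base j))] := rfl
      rcases Nat.lt_or_ge i j with h' | h'
      · rw [List.getElem_of_eq hstep]
        rw [List.getElem_append_left (by rw [antiL_length]; omega)]
        exact ih h' (by rw [antiL_length]; omega)
      · have hij : i = j := by omega
        subst hij
        rw [List.getElem_of_eq hstep]
        rw [List.getElem_append_right (by rw [antiL_length])]
        simp [antiL_length]

/-! ### list helpers -/

lemma seg_succ {N : ℕ} (x : ℕ → Fin N) (t : ℕ) : seg x (t+1) = seg x t ++ [x t] := by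
  show List.ofFn (fun j : Fin (t+1) => x j) = _
  rw [List.ofFn_succ']
  simp [seg, List.concat_eq_append]

lemma seg_add {N : ℕ} (x : ℕ → Fin N) (a b : ℕ) :
    seg x (a + b) = seg x a ++ List.ofFn (fun i : Fin b => x (a + i)) := by
  simp [seg, List.ofFn_add]

lemma ofFn_eq_take {α : Type*} {L : List α} {i : ℕ} (f : Fin i → α) (hik : i ≤ L.length)
    (hf : ∀ (a : ℕ) (ha : a < i), f ⟨a, ha⟩ = L[a]'(by omega)) : List.ofFn f = L.take i := by
  apply List.ext_getElem
  · simp [List.length_ofFn, List.length_take]; omega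
  · intro a h1 h2
    rw [List.getElem_take]
    simp only [List.getElem_ofFn]
    exact hf a (by simpa using h1)

lemma take_ofFn' {α : Type*} {kk : ℕ} (f : Fin kk → α) (i : ℕ) (h : i ≤ kk) :
    (List.ofFn f).take i = List.ofFn (fun a : Fin i => f (Fin.castLE h a)) := by
  symm
  refine ofFn_eq_take _ (by simp [List.length_ofFn, h]) ?_
  intro a ha
  simp [List.getElem_ofFn]

/-! ### finite roster -/

def Shl (n k : ℕ) := {l : List (Fin n) // l.length < k}

instance : Finite (Shl n k) := by
  have hinj : Function.Injective (fun l : Shl n k => (fun i : Fin k => l.1[(i : ℕ)]?)) := by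
    intro l1 l2 h
    have hl1 := l1.2
    have hl2 := l2.2
    apply Subtype.ext
    apply List.ext_getElem?
    intro i
    rcases Nat.lt_or_ge i k with hik | hik
    · exact congrFun h ⟨i, hik⟩
    · rw [List.getElem?_eq_none (by omega), List.getElem?_eq_none (by omega)]
  exact Finite.of_injective _ hinj

def RF (n k : ℕ) := Shl n k → Fin n

instance : Finite (RF n k) := by unfold RF; infer_instance

def restrictQ (q : List (Fin n) → Fin n) : RF n k := fun l => q l.1

def extQ [NeZero n] (ρ : RF n k) : List (Fin n) → Fin n :=
  fun l => if h : l.length < k then ρ ⟨l, h⟩ else 0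

lemma extQ_restrictQ [NeZero n] (q : List (Fin n) → Fin n) (l : List (Fin n)) (h : l.length < k) :
    extQ (restrictQ (k := k) q) l = q l := by
  rw [extQ, dif_pos h]
  rfl

/-! ### codes -/

def Xc [NeZero n] (k : ℕ) (y : ℕ → Fin n) (d : ℕ) (q : List (Fin n) → Fin n) : ℕ → Fin 2 :=
  fun t =>
    if d ≤ t then
      eqFin (y (t - d))
        (q (List.ofFn fun i : Fin ((t - d) - ((t - d) - t % k)) => y ((t - d) - t % k + i)))
    else 0

def dFin [NeZero k] (m : ℕ) : Fin k :=
  ⟨(k - m % k) % k, Nat.mod_lt _ (Nat.pos_of_ne_zero (NeZero.ne k))⟩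

lemma dFin_spec [NeZero k] (m : ℕ) : (m + (dFin (k := k) m).val) % k = 0 := by
  have hk : 0 < k := Nat.pos_of_ne_zero (NeZero.ne k)
  have h1 : m % k < k := Nat.mod_lt _ hk
  rcases Nat.eq_zero_or_pos (m % k) with h0 | h0
  · simp [dFin, h0, Nat.add_mod, Nat.mod_self]
  · have h2 : (k - m % k) % k = k - m % k := Nat.mod_eq_of_lt (by omega)
    show (m + (k - m % k) % k) % k = 0
    rw [h2, Nat.add_mod, h2]
    have : m % k + (k - m % k) = k := by omega
    rw [this, Nat.mod_self]

def Tup (n k : ℕ) := (Fin k × RF n k) → P2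

noncomputable def BassT [NeZero n] [NeZero k] (T : Tup n k) (y : ℕ → Fin n) (m : ℕ) :
    (List (Fin n) → Fin n) → List (Fin 2) :=
  fun q => antiL (T (dFin m, restrictQ (k := k) q))
    (List.ofFn fun t : Fin (m + (dFin (k := k) m).val) =>
      Xc k y (dFin (k := k) m).val (extQ (k := k) (restrictQ (k := k) q)) t) k

lemma BassT_length [NeZero n] [NeZero k] (T : Tup n k) (y : ℕ → Fin n) (m : ℕ)
    (q : List (Fin n) → Fin n) : (BassT T y m q).length = k := by
  unfold BassT; exact antiL_length _ _ _

noncomputable def Wm [NeZero n] [NeZero k] (T : Tup n k) (y : ℕ → Fin n) (m : ℕ) :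
    List (Fin n) → Fin n :=
  gameW k (BassT T y m)

open Classical in
noncomputable def mact [NeZero n] [NeZero k] (T : Tup n k) (y : ℕ → Fin n) : ℕ → ℕ
  | 0 => 0
  | τ+1 =>
      if y τ = Wm T y (mact T y τ) (List.ofFn fun i : Fin (τ - mact T y τ) => y (mact T y τ + i))
          ∨ τ + 1 = mact T y τ + k
      then τ + 1 else mact T y τ

noncomputable def phi [NeZero n] [NeZero k] (T : Tup n k) (y : ℕ → Fin n) (τ : ℕ) : Fin n :=
  Wm T y (mact T y τ) (List.ofFn fun i : Fin (τ - mact T y τ) => y (mact T y τ + i))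

open Classical in
lemma mact_succ [NeZero n] [NeZero k] (T : Tup n k) (y : ℕ → Fin n) (τ : ℕ) :
    mact T y (τ+1) = if y τ = phi T y τ ∨ τ + 1 = mact T y τ + k then τ + 1 else mact T y τ := by
  rfl

noncomputable def psiT [NeZero n] [NeZero k] (T : Tup n k) : List (Fin n) → Fin n :=
  fun l => phi T (fun i => l.getD i 0) l.length

section Machine

variable [NeZero n] [NeZero k] (T : Tup n k) (y : ℕ → Fin n)

lemma mact_le (τ : ℕ) : mact T y τ ≤ τ := by
  induction τ with
  | zero => exact le_refl 0
  | succ τ ih =>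
      rw [mact_succ]
      split
      · exact le_refl _
      · omega

lemma mact_lt (τ : ℕ) : τ < mact T y τ + k := by
  have hk : 0 < k := Nat.pos_of_ne_zero (NeZero.ne k)
  induction τ with
  | zero => omega
  | succ τ ih =>
      rw [mact_succ]
      split
      · omega
      · rename_i h
        push_neg at h
        omega

lemma mact_mono {τ1 τ2 : ℕ} (h : τ1 ≤ τ2) : mact T y τ1 ≤ mact T y τ2 := by
  induction τ2 with
  | zero => 
      have : τ1 = 0 := by omega
      subst this; exact le_refl _
  | succ τ ih =>
      rcases Nat.lt_or_ge τ1 (τ+1) with h' | h'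
      · refine le_trans (ih (by omega)) ?_
        rw [mact_succ]
        split
        · exact le_trans (mact_le T y τ) (by omega)
        · exact le_refl _
      · have : τ1 = τ + 1 := by omega
        subst this; exact le_refl _

lemma mact_idem (τ : ℕ) : mact T y (mact T y τ) = mact T y τ := by
  induction τ with
  | zero => rfl
  | succ τ ih =>
      rw [mact_succ]
      split
      · rw [mact_succ]
        split
        · rfl
        · rename_i h1 h2
          exact absurd h1 h2
      · exact ih

lemma mact_hit (τ : ℕ) (h : y τ = phi T y τ) : mact T y (τ+1) = τ+1 := by
  rw [mact_succ, if_pos (Or.inl h)]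

end Machine

/-! ### congruence / locality -/

section Congr

variable [NeZero n] [NeZero k]

lemma Xc_congr {y1 y2 : ℕ → Fin n} {m : ℕ} (h : ∀ s, s < m → y1 s = y2 s)
    (d : ℕ) (q : List (Fin n) → Fin n) (t : ℕ) (ht : t < m + d) :
    Xc k y1 d q t = Xc k y2 d q t := by
  unfold Xc
  split
  · rename_i hdt
    have ht' : t - d < m := by omega
    rw [h _ ht']
    have : (List.ofFn fun i : Fin ((t - d) - ((t - d) - t % k)) => y1 ((t - d) - t % k + i)) =
        (List.ofFn fun i : Fin ((t - d) - ((t - d) - t % k)) => y2 ((t - d) - t % k + i)) := by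
      congr 1
      funext i
      have hi := i.isLt
      exact h _ (by omega)
    rw [this]
  · rfl

lemma BassT_congr (T : Tup n k) {y1 y2 : ℕ → Fin n} {m : ℕ} (h : ∀ s, s < m → y1 s = y2 s) :
    BassT T y1 m = BassT T y2 m := by
  funext q
  unfold BassT
  congr 1
  refine congrArg List.ofFn (funext fun t => ?_)
  have ht := t.isLt
  exact Xc_congr h _ _ _ (by omega)

lemma Wm_congr (T : Tup n k) {y1 y2 : ℕ → Fin n} {m : ℕ} (h : ∀ s, s < m → y1 s = y2 s) :
    Wm T y1 m = Wm T y2 m := by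
  unfold Wm
  rw [BassT_congr T h]

lemma mact_congr (T : Tup n k) {y1 y2 : ℕ → Fin n} :
    ∀ τ, (∀ s, s < τ → y1 s = y2 s) → mact T y1 τ = mact T y2 τ := by
  intro τ
  induction τ with
  | zero => intro _; rfl
  | succ τ ih =>
      intro h
      have hτ := ih (fun s hs => h s (by omega))
      have hm : mact T y1 τ ≤ τ := mact_le T y1 τ
      have hW : Wm T y1 (mact T y1 τ) = Wm T y2 (mact T y1 τ) :=
        Wm_congr T (fun s hs => h s (by omega))
      have hpath : (List.ofFn fun i : Fin (τ - mact T y1 τ) => y1 (mact T y1 τ + i)) =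
          (List.ofFn fun i : Fin (τ - mact T y1 τ) => y2 (mact T y1 τ + i)) := by
        refine congrArg List.ofFn (funext fun i => ?_)
        have hi := i.isLt
        exact h _ (by omega)
      show (if y1 τ = Wm T y1 (mact T y1 τ) (List.ofFn fun i : Fin (τ - mact T y1 τ) => y1 (mact T y1 τ + i)) ∨ τ + 1 = mact T y1 τ + k then τ + 1 else mact T y1 τ)
        = (if y2 τ = Wm T y2 (mact T y2 τ) (List.ofFn fun i : Fin (τ - mact T y2 τ) => y2 (mact T y2 τ + i)) ∨ τ + 1 = mact T y2 τ + k then τ + 1 else mact T y2 τ)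
      rw [← hτ, ← hW, ← hpath, h τ (by omega)]

lemma phi_congr (T : Tup n k) {y1 y2 : ℕ → Fin n} {τ : ℕ} (h : ∀ s, s < τ → y1 s = y2 s) :
    phi T y1 τ = phi T y2 τ := by
  have hτ := mact_congr T τ h
  have hm : mact T y1 τ ≤ τ := mact_le T y1 τ
  unfold phi
  rw [← hτ]
  rw [← Wm_congr T (fun s hs => h s (by omega))]
  congr 1
  refine congrArg List.ofFn (funext fun i => ?_)
  have hi := i.isLt
  exact h _ (by omega)

lemma psiT_seg (T : Tup n k) (y : ℕ → Fin n) (τ : ℕ) : psiT T (seg y τ) = phi T y τ := by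
  unfold psiT
  have hlen : (seg y τ).length = τ := by simp [seg]
  rw [hlen]
  apply phi_congr
  intro s hs
  show (seg y τ).getD s 0 = y s
  rw [List.getD_eq_getElem (seg y τ) 0 (by simpa [seg] using hs)]
  simp [seg]

end Congr

/-! ### window success and chaining -/

section Main

variable [NeZero n] [NeZero k]

lemma window_success (T : Tup n k) (y : ℕ → Fin n) (Ns : ℕ)
    (hPromW : ∀ (m : ℕ) (ρ : RF n k) (j : ℕ), Ns ≤ j →
      ∃ i, i < k ∧ Xc k y ((dFin (k := k) m) : ℕ) (extQ ρ) (j * k + i) =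
        T (dFin m, ρ) (seg (Xc k y ((dFin (k := k) m) : ℕ) (extQ ρ)) (j * k + i)))
    (m : ℕ) (hm : mact T y m = m) (hNm : Ns * k ≤ m) :
    ∃ h, m ≤ h ∧ h < m + k ∧ y h = phi T y h := by
  have hk : 0 < k := Nat.pos_of_ne_zero (NeZero.ne k)
  by_contra hcon
  push_neg at hcon
  have hstab : ∀ i, i < k → mact T y (m + i) = m := by
    intro i hik
    induction i with
    | zero => simpa using hm
    | succ i ih =>
        have hi : i < k := by omega
        have hmi := ih hi
        have hcond : ¬ (y (m+i) = phi T y (m+i) ∨ (m+i) + 1 = mact T y (m+i) + k) := by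
          push_neg
          refine ⟨hcon (m+i) (by omega) (by omega), by rw [hmi]; omega⟩
        have heq : m + (i+1) = (m+i) + 1 := by omega
        rw [heq, mact_succ, if_neg hcond]
        exact hmi
  set d : ℕ := ((dFin (k := k) m) : ℕ) with hd
  have hdlt : d < k := (dFin (k := k) m).isLt
  have hdk : (m + d) % k = 0 := dFin_spec m
  set Y : List (Fin n) := List.ofFn fun i : Fin k => y (m + i) with hY
  have hYlen : Y.length = k := by simp [hY]
  have hTake : ∀ i, (h : i ≤ k) → Y.take i = List.ofFn fun a : Fin i => y (m + a) := by
    intro i hik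
    rw [hY, take_ofFn' _ i hik]
    rfl
  have hWm : ∀ i, i < k → Wm T y m (Y.take i) = phi T y (m + i) := by
    intro i hik
    rw [phi, hstab i hik]
    have e1 : m + i - m = i := by omega
    rw [e1, hTake i (le_of_lt hik)]
  have hDod : Dodge Y (Wm T y m) := by
    apply dodge_of
    intro i hi
    rw [hYlen] at hi
    have hYa : Y[i]'(by rw [hYlen]; omega) = y (m + i) := by simp [hY]
    rw [hYa, hWm i hi]
    exact hcon (m + i) (by omega) (by omega)
  have hBlen : ∀ q, (BassT T y m q).length = k := BassT_length T y m
  obtain ⟨q, hq⟩ := gameW_spec k (BassT T y m) hBlen Y hYlen hDod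
  set q' : List (Fin n) → Fin n := extQ (k := k) (restrictQ (k := k) q) with hq'
  set π : P2 := T (dFin m, restrictQ (k := k) q) with hπ
  set XX : ℕ → Fin 2 := Xc k y d q' with hXX
  set base : List (Fin 2) := List.ofFn (fun t : Fin (m + d) => XX t) with hbase
  set BL : List (Fin 2) := antiL π base k with hBL
  have hBq : BassT T y m q = BL := rfl
  have hBLlen : BL.length = k := by rw [hBL]; exact antiL_length _ _ _
  have hpat : pattern q' Y = BL := by
    rw [← hBq, ← hq]
    apply pattern_congr
    intro l hl
    rw [hYlen] at hl
    exact extQ_restrictQ q l hl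
  set jj : ℕ := (m + d) / k with hjj
  have hjjk : jj * k = m + d := Nat.div_mul_cancel (Nat.dvd_of_mod_eq_zero hdk)
  have hjjN : Ns ≤ jj := by
    have h1 : Ns * k ≤ jj * k := by rw [hjjk]; omega
    exact Nat.le_of_mul_le_mul_right h1 hk
  obtain ⟨i, hik, hhit⟩ := hPromW m (restrictQ q) jj hjjN
  rw [← hd, ← hq', ← hXX] at hhit
  have ht : jj * k + i = m + d + i := by rw [hjjk]
  have hmod : ∀ a, a < k → (m + d + a) % k = a := by
    intro a ha
    have e1 : m + d + a = k * jj + a := by rw [mul_comm, hjjk]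
    rw [e1, Nat.mul_add_mod]
    exact Nat.mod_eq_of_lt ha
  have hXval : ∀ a, a < k →
      XX (m + d + a) = eqFin (y (m + a)) (q' (List.ofFn fun b : Fin a => y (m + b))) := by
    intro a ha
    rw [hXX]
    unfold Xc
    rw [if_pos (by omega : d ≤ m + d + a)]
    have e2 : (m + d + a) % k = a := hmod a ha
    have e1 : m + d + a - d = m + a := by omega
    rw [e2, e1]
    have e3 : m + a - a = m := by omega
    rw [e3]
    have e4 : m + a - m = a := by omega
    rw [e4]
  have hBLel : ∀ a, (ha : a < k) → BL[a]'(by omega) = XX (m + d + a) := by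
    intro a ha
    have hpe : (pattern q' Y)[a]'(by rw [pattern_length, hYlen]; omega) =
        eqFin (Y[a]'(by rw [hYlen]; omega)) (q' (Y.take a)) :=
      pattern_getElem Y q' a (by rw [hYlen]; omega) _
    have hYa : Y[a]'(by rw [hYlen]; omega) = y (m + a) := by simp [hY]
    rw [List.getElem_of_eq hpat.symm, hpe, hYa, hTake a (le_of_lt ha), hXval a ha]
  have hseg : seg XX (jj * k + i) = base ++ BL.take i := by
    rw [ht, seg_add]
    congr 1
    apply ofFn_eq_take _ (by rw [hBLlen]; omega)
    intro a ha
    exact (hBLel a (by omega)).symm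
  have htake2 : BL.take i = antiL π base i := by rw [hBL]; exact antiL_take π base (le_of_lt hik)
  have hanti : BL[i]'(by omega) = negFin (π (base ++ BL.take i)) := by
    rw [htake2]
    exact antiL_getElem π base hik (by rw [antiL_length]; omega)
  rw [hseg] at hhit
  have e5 : XX (jj * k + i) = BL[i]'(by omega) := by
    rw [ht]
    exact (hBLel i hik).symm
  have e6 : BL[i]'(by omega) = π (base ++ List.take i BL) := e5.symm.trans hhit
  rw [hanti] at e6
  exact negFin_ne _ e6

lemma hits (T : Tup n k) (y : ℕ → Fin n) (Ns : ℕ)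
    (hPromW : ∀ (m : ℕ) (ρ : RF n k) (j : ℕ), Ns ≤ j →
      ∃ i, i < k ∧ Xc k y ((dFin (k := k) m) : ℕ) (extQ ρ) (j * k + i) =
        T (dFin m, ρ) (seg (Xc k y ((dFin (k := k) m) : ℕ) (extQ ρ)) (j * k + i)))
    (m : ℕ) (hm : Ns * k + k ≤ m) :
    ∃ h, m ≤ h ∧ h < m + k ∧ y h = phi T y h := by
  have hk : 0 < k := Nat.pos_of_ne_zero (NeZero.ne k)
  have hm1 : 1 ≤ m := by omega
  set r : ℕ := mact T y (m - 1) with hr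
  have h1 : r ≤ m - 1 := mact_le T y (m - 1)
  have h2 : m - 1 < r + k := mact_lt T y (m - 1)
  have hrfix : mact T y r = r := by rw [hr]; exact mact_idem T y (m - 1)
  have hrN : Ns * k ≤ r := by omega
  obtain ⟨h0, hh0a, hh0b, hh0hit⟩ := window_success T y Ns hPromW r hrfix hrN
  rcases le_or_gt m h0 with hcase | hcase
  · exact ⟨h0, hcase, by omega, hh0hit⟩
  · have hrA : mact T y (h0 + 1) = h0 + 1 := mact_hit T y h0 hh0hit
    have hgt : m - 1 < h0 + 1 := by
      by_contra hle
      push_neg at hle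
      have hmono := mact_mono T y hle
      rw [hrA, ← hr] at hmono
      omega
    have hh0m : h0 = m - 1 := by omega
    have hmfix : mact T y m = m := by
      have e : m = h0 + 1 := by omega
      rw [e, mact_hit T y h0 hh0hit]
    obtain ⟨h1', ha, hb, hhit⟩ := window_success T y Ns hPromW m hmfix (by omega)
    exact ⟨h1', ha, hb, hhit⟩

lemma main_correct (T : Tup n k) (y : ℕ → Fin n)
    (hProm : ∀ (d : Fin k) (ρ : RF n k), WPred k (T (d, ρ)) (Xc k y (d : ℕ) (extQ ρ))) :
    KPred k (psiT T) y := by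
  haveI := Fintype.ofFinite (RF n k)
  choose NN hNN using fun idx : Fin k × RF n k => hProm idx.1 idx.2
  set Ns : ℕ := Finset.univ.sup NN with hNs
  have hPromW : ∀ (m : ℕ) (ρ : RF n k) (j : ℕ), Ns ≤ j →
      ∃ i, i < k ∧ Xc k y ((dFin (k := k) m) : ℕ) (extQ ρ) (j * k + i) =
        T (dFin m, ρ) (seg (Xc k y ((dFin (k := k) m) : ℕ) (extQ ρ)) (j * k + i)) := by
    intro m ρ j hj
    have hle : NN (dFin (k := k) m, ρ) ≤ Ns := Finset.le_sup (Finset.mem_univ _)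
    exact hNN (dFin m, ρ) j (le_trans hle hj)
  refine ⟨Ns * k + k, fun m hm => ?_⟩
  obtain ⟨h, ha, hb, hc⟩ := hits T y Ns hPromW m hm
  exact ⟨h, ha, hb, by rw [psiT_seg]; exact hc⟩

end Main

/-! ### a covering family is infinite -/

def evPref (k : ℕ) (l : List P2) : ℕ → List (Fin 2)
  | 0 => []
  | t+1 => evPref k l t ++ [negFin ((l.getD ((t / k) % l.length) (fun _ => 0)) (evPref k l t))]

def evX (k : ℕ) (l : List P2) : ℕ → Fin 2 :=
  fun t => negFin ((l.getD ((t / k) % l.length) (fun _ => 0)) (evPref k l t))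

lemma evPref_eq (k : ℕ) (l : List P2) : ∀ t, evPref k l t = seg (evX k l) t := by
  intro t
  induction t with
  | zero => rfl
  | succ t ih =>
      have hstep : evPref k l (t+1) = evPref k l t ++ [evX k l t] := rfl
      rw [hstep, seg_succ, ih]

lemma aleph0_le_of_cover {k : ℕ} (hk : 1 ≤ k) (P : Set P2)
    (hP : ∀ x : ℕ → Fin 2, ∃ π ∈ P, WPred k π x) : ℵ₀ ≤ #P := by
  by_contra hlt
  push_neg at hlt
  haveI : Finite ↥P := Cardinal.lt_aleph0_iff_finite.mp hlt
  have hfin : P.Finite := Set.finite_coe_iff.mp ‹_›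
  set l : List P2 := hfin.toFinset.toList with hl
  have hmem : ∀ π, π ∈ P → π ∈ l := by
    intro π hπ
    rw [hl, Finset.mem_toList, Set.Finite.mem_toFinset]
    exact hπ
  obtain ⟨π₀, hπ₀mem, _⟩ := hP (fun _ => 0)
  have hlpos : 0 < l.length := List.length_pos_iff.mpr (by
    intro hnil
    have := hmem π₀ hπ₀mem
    rw [hnil] at this
    simp at this)
  obtain ⟨π, hπP, hπpred⟩ := hP (evX k l)
  obtain ⟨j0, hj0, hj0get⟩ := List.mem_iff_getElem.mp (hmem π hπP)
  obtain ⟨N, hN⟩ := hπpred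
  set m : ℕ := j0 + l.length * (N + 1) with hm
  have hmN : N ≤ m := by
    have := Nat.le_mul_of_pos_left (N + 1) hlpos
    omega
  obtain ⟨i, hik, hhit⟩ := hN m hmN
  have hdiv : (m * k + i) / k = m := by
    rw [mul_comm]
    rw [Nat.mul_add_div (by omega)]
    have : i / k = 0 := Nat.div_eq_of_lt hik
    omega
  have hmod : m % l.length = j0 := by
    rw [hm, Nat.add_mul_mod_self_left]
    exact Nat.mod_eq_of_lt hj0
  have hx : evX k l (m * k + i) = negFin (π (seg (evX k l) (m * k + i))) := by
    rw [evX, hdiv, hmod]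
    rw [evPref_eq]
    congr 1
    rw [List.getD_eq_getElem l _ (by omega)]
    rw [hj0get]
  rw [hx] at hhit
  exact negFin_ne _ hhit

end S2

open S2 in
/-- Corollary: `𝔳ₙᶜᵒⁿˢᵗ(k) ≤ 𝔳̄₂ᶜᵒⁿˢᵗ(k)`: from any family of predictors weakly k-constantly
predicting all of `2^ω` one obtains a family of predictors (of size at most `max(|Π|, ℵ₀)`)
k-constantly predicting all of `n^ω`. -/
theorem stmt2 (n k : ℕ) (hn : 2 ≤ n) (hk : 1 ≤ k) :
    (∀ P : Set (List (Fin 2) → Fin 2),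
      (∀ x : ℕ → Fin 2, ∃ π ∈ P, WPred k π x) →
      ∃ Q : Set (List (Fin n) → Fin n),
        #Q ≤ max (#P) ℵ₀ ∧ ∀ y : ℕ → Fin n, ∃ ψ ∈ Q, KPred k ψ y) ∧
    vConst n k ≤ vBar 2 k := by
  haveI : NeZero n := ⟨by omega⟩
  haveI : NeZero k := ⟨by omega⟩
  have part1 : ∀ P : Set (List (Fin 2) → Fin 2),
      (∀ x : ℕ → Fin 2, ∃ π ∈ P, WPred k π x) →
      ∃ Q : Set (List (Fin n) → Fin n),
        #Q ≤ max (#P) ℵ₀ ∧ ∀ y : ℕ → Fin n, ∃ ψ ∈ Q, KPred k ψ y := by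
    intro P hP
    refine ⟨Set.range (fun Tm : (Fin k × RF n k) → ↥P => psiT (fun idx => ((Tm idx : P2)))), ?_, ?_⟩
    · have hfin : #(Fin k × RF n k) < ℵ₀ := by
        haveI : Finite (Fin k × RF n k) := by infer_instance
        exact Cardinal.lt_aleph0_of_finite _
      calc #(Set.range (fun Tm : (Fin k × RF n k) → ↥P => psiT (fun idx => ((Tm idx : P2)))))
          ≤ #((Fin k × RF n k) → ↥P) := Cardinal.mk_range_le
        _ = #↥P ^ #(Fin k × RF n k) := (Cardinal.power_def _ _).symm
        _ ≤ max (#↥P) ℵ₀ := by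
            rcases lt_or_ge (#↥P) ℵ₀ with h | h
            · exact le_trans (le_of_lt (Cardinal.power_lt_aleph0 h hfin)) (le_max_right _ _)
            · exact le_trans (Cardinal.pow_le h hfin) (le_max_left _ _)
    · intro y
      have hch : ∀ idx : Fin k × RF n k, ∃ π, π ∈ P ∧
          WPred k π (Xc k y ((idx.1 : Fin k) : ℕ) (extQ idx.2)) := by
        intro idx
        obtain ⟨π, h1, h2⟩ := hP (Xc k y ((idx.1 : Fin k) : ℕ) (extQ idx.2))
        exact ⟨π, h1, h2⟩
      choose Tf hTmem hTpred using hch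
      refine ⟨psiT (fun idx => Tf idx), ⟨fun idx => ⟨Tf idx, hTmem idx⟩, rfl⟩, ?_⟩
      exact main_correct (fun idx => Tf idx) y (fun d ρ => hTpred (d, ρ))
  refine ⟨part1, ?_⟩
  have hSne : Set.Nonempty {c | ∃ P : Set (List (Fin 2) → Fin 2), #P = c ∧
      ∀ x : ℕ → Fin 2, ∃ π ∈ P, WPred k π x} := by
    refine ⟨#(Set.univ : Set (List (Fin 2) → Fin 2)), Set.univ, rfl, fun x => ?_⟩
    refine ⟨fun t => x t.length, Set.mem_univ _, 0, fun m _ => ⟨0, by omega, ?_⟩⟩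
    simp [seg]
  obtain ⟨P₀, hcard, hcov⟩ := csInf_mem hSne
  obtain ⟨Q, hQle, hQcov⟩ := part1 P₀ hcov
  have hle : vConst n k ≤ #Q := csInf_le' ⟨Q, rfl, hQcov⟩
  have hinf : ℵ₀ ≤ #P₀ := aleph0_le_of_cover hk P₀ hcov
  calc vConst n k ≤ #Q := hle
    _ ≤ max (#P₀) ℵ₀ := hQle
    _ = #P₀ := max_eq_left hinf
    _ = vBar 2 k := hcard
end

section
/- For all natural numbers n ≥ 2 and k ≥ 1: 𝔢_n^const(k) ≥ 𝔢̄_2^const(k). That is, if F ⊆ n^ω is a family such that no single predictor π : n^{<ω} → n k-constantly predicts every member of F, then there is a family Y ⊆ 2^ω with |Y| ≤ max(|F|, ℵ₀) such that no single predictor π : 2^{<ω} → 2 weakly k-constantly predicts every member of Y; consequently the least cardinality of a family F ⊆ n^ω such that every predictor fails to k-constantly predict some member of F is at least the least cardinality of a family Y ⊆ 2^ω such that every predictor fails to weakly k-constantly predict some member of Y. -/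
open Cardinal

namespace S3
open scoped Classical


lemma seg_succ {m : ℕ} (x : ℕ → Fin m) (j : ℕ) :
    seg x (j+1) = seg x j ++ [x j] := by
  rw [seg, List.ofFn_succ']
  simp [Fin.last, List.concat_eq_append, seg]

lemma seg_length {m : ℕ} (x : ℕ → Fin m) (j : ℕ) : (seg x j).length = j := by
  simp [seg]

lemma seg_take {m : ℕ} (x : ℕ → Fin m) (s j : ℕ) (h : s ≤ j) :
    (seg x j).take s = seg x s := by
  apply List.ext_getElem
  · simp [seg, h]
  · intro i h1 h2
    simp [seg]

lemma seg_drop {m : ℕ} (x : ℕ → Fin m) (s j : ℕ) (h : s ≤ j) :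
    (seg x j).drop s = List.ofFn (fun a : Fin (j - s) => x (s + a)) := by
  apply List.ext_getElem
  · simp [seg]
  · intro i h1 h2
    simp [seg]

lemma seg_getD {m : ℕ} (x : ℕ → Fin m) (j t : ℕ) (h : t < j) (d : Fin m) :
    (seg x j).getD t d = x t := by
  rw [List.getD_eq_getElem?_getD]
  simp [seg, h]

def flip2 : Fin 2 → Fin 2 := fun b => if b = 0 then 1 else 0

lemma flip2_iff (a b : Fin 2) : a = flip2 b ↔ a ≠ b := by
  revert a b; decide



variable (n' k' : ℕ)

abbrev Code := (Fin (k'+1) → Fin (n'+2)) → Fin (k'+1) → Fin 2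

def label (G : Code n' k') (s : List (Fin (n'+2))) : Fin 2 :=
  G (fun a => s.getD a 0) ⟨(s.length - 1) % (k'+1), Nat.mod_lt _ (Nat.succ_pos k')⟩

lemma take_pad (s : List (Fin (n'+2))) (h2 : s.length ≤ k'+1) :
    (List.ofFn (fun a : Fin (k'+1) => s.getD a 0)).take s.length = s := by
  apply List.ext_getElem
  · simp; omega
  · intro i h1 hl
    simp only [List.getElem_take, List.getElem_ofFn]
    rw [List.getD_eq_getElem?_getD]
    simp [hl]

lemma label_pad (G : Code n' k') (s : List (Fin (n'+2))) (h1 : 1 ≤ s.length)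
    (h2 : s.length ≤ k'+1) :
    label n' k' G s
      = G (fun a => s.getD a 0) ⟨s.length - 1, by omega⟩ := by
  unfold label
  congr 1
  ext
  simp
  omega

def winpre (x : ℕ → Fin (n'+2)) (d q ℓ : ℕ) : List (Fin (n'+2)) :=
  List.ofFn (fun a : Fin ℓ => x (q*(k'+1) + d + a))

lemma winpre_length (x : ℕ → Fin (n'+2)) (d q ℓ : ℕ) :
    (winpre n' k' x d q ℓ).length = ℓ := by simp [winpre]

lemma winpre_take (x : ℕ → Fin (n'+2)) (d q ℓ ℓ' : ℕ) (h : ℓ' ≤ ℓ) :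
    (winpre n' k' x d q ℓ).take ℓ' = winpre n' k' x d q ℓ' := by
  apply List.ext_getElem
  · simp [winpre]; omega
  · intro i h1 h2
    simp [winpre]

def ybit (d : ℕ) (G : Code n' k') (x : ℕ → Fin (n'+2)) (t : ℕ) : Fin 2 :=
  label n' k' G (winpre n' k' x d (t/(k'+1)) (t % (k'+1) + 1))

lemma ybit_block (d : ℕ) (G : Code n' k') (x : ℕ → Fin (n'+2)) (q i : ℕ) (h : i < k'+1) :
    ybit n' k' d G x (q*(k'+1) + i) = label n' k' G (winpre n' k' x d q (i+1)) := by
  unfold ybit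
  have h1 : (q*(k'+1) + i) / (k'+1) = q := by
    rw [Nat.add_comm, Nat.add_mul_div_right _ _ (Nat.succ_pos k'), Nat.div_eq_of_lt h, Nat.zero_add]
  have h2 : (q*(k'+1) + i) % (k'+1) = i := by
    rw [Nat.add_comm, Nat.add_mul_mod_self_right, Nat.mod_eq_of_lt h]
  rw [h1, h2]

def virt (past p : List (Fin (n'+2))) : ℕ → Fin (n'+2) := fun t => (past ++ p).getD t 0

variable (π : List (Fin 2) → Fin 2)

def demand (d q : ℕ) (past p : List (Fin (n'+2))) (G : Code n' k') : Fin 2 :=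
  flip2 (π (seg (ybit n' k' d G (virt n' past p)) (q*(k'+1) + p.length)))

def alive (d q : ℕ) (past p : List (Fin (n'+2))) : Set (Code n' k') :=
  {G | ∀ i' < p.length,
    label n' k' G (p.take (i'+1)) = demand n' k' π d q past (p.take i') G}

def Good : ℕ → ℕ → ℕ → List (Fin (n'+2)) → List (Fin (n'+2)) → Prop
  | 0, d, q, past, p => (alive n' k' π d q past p).Nonempty
  | (j+1), d, q, past, p => ∃ r : Fin (n'+2), ∀ v, v ≠ r → Good j d q past (p ++ [v])

lemma alive_append (d q : ℕ) (past p : List (Fin (n'+2))) (v : Fin (n'+2))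
    (G : Code n' k') :
    G ∈ alive n' k' π d q past (p ++ [v]) ↔
      (G ∈ alive n' k' π d q past p ∧
        label n' k' G (p ++ [v]) = demand n' k' π d q past p G) := by
  unfold alive
  simp only [Set.mem_setOf_eq, List.length_append, List.length_singleton]
  constructor
  · intro h
    refine ⟨fun i' hi' => ?_, ?_⟩
    · have := h i' (by omega)
      rwa [List.take_append_of_le_length (by omega),
           List.take_append_of_le_length (by omega)] at this
    · have := h p.length (by omega)
      rwa [show p.length + 1 = (p ++ [v]).length by simp,
           List.take_length, List.take_append_of_le_length (le_refl _),
           List.take_length] at this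
  · rintro ⟨h1, h2⟩ i' hi'
    rcases Nat.lt_or_ge i' p.length with h | h
    · rw [List.take_append_of_le_length (by omega),
          List.take_append_of_le_length (by omega)]
      exact h1 i' h
    · have hi : i' = p.length := by omega
      rw [hi, show p.length + 1 = (p ++ [v]).length by simp,
          List.take_length, List.take_append_of_le_length (le_refl _),
          List.take_length]
      exact h2

lemma fin2_eq_of_ne (a b c : Fin 2) (h1 : a ≠ c) (h2 : b ≠ c) : a = b := by
  revert a b c; decide

lemma prefix_eq_of_length {α : Type*} {p₁ p₂ s : List α} (h1 : p₁ <+: s) (h2 : p₂ <+: s)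
    (h : p₁.length = p₂.length) : p₁ = p₂ :=
  (List.prefix_of_prefix_length_le h1 h2 h.le).eq_of_length h

lemma not_good_cert (d q : ℕ) (past : List (Fin (n'+2))) :
    ∀ (j : ℕ) (p : List (Fin (n'+2))), ¬ Good n' k' π j d q past p →
    ∃ cert : List (List (Fin (n'+2)) × List (Fin (n'+2))),
      (∀ ab ∈ cert, ∀ cd ∈ cert, ab.1 ≠ cd.2) ∧
      (∀ ab ∈ cert, ∀ s ∈ [ab.1, ab.2],
          p <+: s ∧ p.length < s.length ∧ s.length ≤ p.length + j) ∧
      (∀ G ∈ alive n' k' π d q past p,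
          ∃ ab ∈ cert, label n' k' G ab.1 = label n' k' G ab.2) := by
  intro j
  induction j with
  | zero =>
    intro p h
    refine ⟨[], by simp, by simp, fun G hG => absurd ⟨G, hG⟩ h⟩
  | succ j ih =>
    intro p h
    have h' : ∀ r : Fin (n'+2), ∃ v, v ≠ r ∧ ¬ Good n' k' π j d q past (p ++ [v]) := by
      simp only [Good] at h
      push_neg at h
      exact h
    obtain ⟨v₁, hv₁ne, hv₁⟩ := h' 0
    obtain ⟨v₂, hv₂ne, hv₂⟩ := h' v₁
    obtain ⟨C₁, hC₁a, hC₁b, hC₁c⟩ := ih (p ++ [v₁]) hv₁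
    obtain ⟨C₂, hC₂a, hC₂b, hC₂c⟩ := ih (p ++ [v₂]) hv₂
    refine ⟨(p ++ [v₁], p ++ [v₂]) :: (C₁ ++ C₂), ?_, ?_, ?_⟩
    · -- firsts never equal seconds
      intro ab hab cd hcd
      have hlen1 : ∀ ee ∈ C₁, ∀ s ∈ [ee.1, ee.2], (p ++ [v₁]) <+: s ∧ p.length + 1 < s.length := by
        intro ee hee s hs
        obtain ⟨h1, h2, h3⟩ := hC₁b ee hee s hs
        exact ⟨h1, by simpa using h2⟩
      have hlen2 : ∀ ee ∈ C₂, ∀ s ∈ [ee.1, ee.2], (p ++ [v₂]) <+: s ∧ p.length + 1 < s.length := by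
        intro ee hee s hs
        obtain ⟨h1, h2, h3⟩ := hC₂b ee hee s hs
        exact ⟨h1, by simpa using h2⟩
      rcases List.mem_cons.mp hab with rfl | hab <;>
        rcases List.mem_cons.mp hcd with rfl | hcd
      · -- both root
        simp only
        intro hcon
        have : v₁ = v₂ := by simpa using hcon
        exact hv₂ne this.symm
      · -- ab root, cd in C₁ ++ C₂
        rcases List.mem_append.mp hcd with hcd | hcd
        · have := (hlen1 cd hcd cd.2 (by simp)).2
          intro hcon
          have : (p ++ [v₁]).length = cd.2.length := congrArg List.length hcon
          simp at this; omega
        · have := (hlen2 cd hcd cd.2 (by simp)).2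
          intro hcon
          have : (p ++ [v₁]).length = cd.2.length := congrArg List.length hcon
          simp at this; omega
      · -- ab in C's, cd root
        rcases List.mem_append.mp hab with hab | hab
        · have := (hlen1 ab hab ab.1 (by simp)).2
          intro hcon
          have : ab.1.length = (p ++ [v₂]).length := by rw [hcon]
          simp at this; omega
        · have := (hlen2 ab hab ab.1 (by simp)).2
          intro hcon
          have : ab.1.length = (p ++ [v₂]).length := by rw [hcon]
          simp at this; omega
      · -- both in C₁ ++ C₂
        rcases List.mem_append.mp hab with hab | hab <;>
          rcases List.mem_append.mp hcd with hcd | hcd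
        · exact hC₁a ab hab cd hcd
        · -- ab ∈ C₁, cd ∈ C₂
          intro hcon
          have h1 := (hlen1 ab hab ab.1 (by simp)).1
          have h2 := (hlen2 cd hcd cd.2 (by simp)).1
          rw [hcon] at h1
          have : p ++ [v₁] = p ++ [v₂] :=
            prefix_eq_of_length h1 h2 (by simp)
          have : v₁ = v₂ := by simpa using this
          exact hv₂ne this.symm
        · intro hcon
          have h1 := (hlen2 ab hab ab.1 (by simp)).1
          have h2 := (hlen1 cd hcd cd.2 (by simp)).1
          rw [hcon] at h1
          have : p ++ [v₂] = p ++ [v₁] :=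
            prefix_eq_of_length h1 h2 (by simp)
          have : v₁ = v₂ := by simpa using this.symm
          exact hv₂ne this.symm
        · exact hC₂a ab hab cd hcd
    · -- prefix/length structure
      intro ab hab s hs
      rcases List.mem_cons.mp hab with rfl | hab
      · rcases List.mem_cons.mp hs with rfl | hs
        · exact ⟨List.prefix_append p [v₁], by simp, by simp⟩
        · have : s = p ++ [v₂] := by simpa using hs
          subst this
          exact ⟨List.prefix_append p [v₂], by simp, by simp⟩
      · rcases List.mem_append.mp hab with hab | hab
        · obtain ⟨h1, h2, h3⟩ := hC₁b ab hab s hs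
          refine ⟨(List.prefix_append p [v₁]).trans h1, by simp at h2 ⊢; omega,
            by simp at h3 ⊢; omega⟩
        · obtain ⟨h1, h2, h3⟩ := hC₂b ab hab s hs
          refine ⟨(List.prefix_append p [v₂]).trans h1, by simp at h2 ⊢; omega,
            by simp at h3 ⊢; omega⟩
    · -- coverage
      intro G hG
      by_cases hG1 : G ∈ alive n' k' π d q past (p ++ [v₁])
      · obtain ⟨ab, hab, heq⟩ := hC₁c G hG1
        exact ⟨ab, by simp [hab], heq⟩
      by_cases hG2 : G ∈ alive n' k' π d q past (p ++ [v₂])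
      · obtain ⟨ab, hab, heq⟩ := hC₂c G hG2
        exact ⟨ab, by simp [hab], heq⟩
      refine ⟨(p ++ [v₁], p ++ [v₂]), by simp, ?_⟩
      have h1 : label n' k' G (p ++ [v₁]) ≠ demand n' k' π d q past p G := by
        intro hcon
        exact hG1 ((alive_append n' k' π d q past p v₁ G).mpr ⟨hG, hcon⟩)
      have h2 : label n' k' G (p ++ [v₂]) ≠ demand n' k' π d q past p G := by
        intro hcon
        exact hG2 ((alive_append n' k' π d q past p v₂ G).mpr ⟨hG, hcon⟩)
      exact fin2_eq_of_ne _ _ _ h1 h2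

lemma good_top (d q : ℕ) (past : List (Fin (n'+2))) :
    Good n' k' π (k'+1) d q past [] := by
  classical
  by_contra h
  obtain ⟨cert, hA, hB, hC⟩ := not_good_cert n' k' π d q past (k'+1) [] h
  set Gw : Code n' k' := fun u i =>
    if ∃ cd ∈ cert, (List.ofFn u).take ((i:ℕ)+1) = cd.2 then 1 else 0 with hGw
  have hmem : Gw ∈ alive n' k' π d q past [] := by
    intro i' hi'
    simp at hi'
  obtain ⟨ab, hab, heq⟩ := hC Gw hmem
  have hlab : ∀ s : List (Fin (n'+2)), 1 ≤ s.length → s.length ≤ k'+1 →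
      label n' k' Gw s = (if ∃ cd ∈ cert, s = cd.2 then 1 else 0) := by
    intro s h1 h2
    rw [label_pad n' k' Gw s h1 h2, hGw]
    simp only [Fin.val_mk]
    have hs : (s.length - 1) + 1 = s.length := by omega
    have e1 : (List.ofFn fun a : Fin (k'+1) => s.getD (↑a) 0).take (s.length - 1 + 1) = s := by
      rw [hs, take_pad n' k' s h2]
    simp only [e1]
  obtain ⟨hp1, hl1, hu1⟩ := hB ab hab ab.1 (by simp)
  obtain ⟨hp2, hl2, hu2⟩ := hB ab hab ab.2 (by simp)
  simp only [List.length_nil] at hl1 hu1 hl2 hu2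
  rw [hlab ab.1 (by omega) (by omega), hlab ab.2 (by omega) (by omega)] at heq
  have hno : ¬ ∃ cd ∈ cert, ab.1 = cd.2 := by
    rintro ⟨cd, hcd, hcon⟩
    exact hA ab hab cd hcd hcon
  rw [if_neg hno, if_pos ⟨ab, hab, rfl⟩] at heq
  exact absurd heq (by decide)

noncomputable def choice (σ : List (Fin (n'+2))) (r : ℕ) : Fin (n'+2) :=
  let j := σ.length
  let m0 := j - r
  let d := m0 % (k'+1)
  let i := (j - m0) % (k'+1)
  let s := m0 + (k'+1) * ((j - m0) / (k'+1))
  if h : ∃ rr : Fin (n'+2), ∀ v, v ≠ rr →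
      Good n' k' π (k'+1 - i - 1) d ((s - d)/(k'+1)) (σ.take s) (σ.drop s ++ [v])
  then h.choose else 0

noncomputable def runAux : List (Fin (n'+2)) → ℕ
  | [] => 0
  | a :: t => if a = choice n' k' π t.reverse (runAux t) then 0 else runAux t + 1

noncomputable def rho (σ : List (Fin (n'+2))) : Fin (n'+2) :=
  choice n' k' π σ (runAux n' k' π σ.reverse)

lemma run_snoc (σ : List (Fin (n'+2))) (a : Fin (n'+2)) :
    runAux n' k' π (σ ++ [a]).reverse
      = if a = rho n' k' π σ then 0 else runAux n' k' π σ.reverse + 1 := by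
  have h : (σ ++ [a]).reverse = a :: σ.reverse := by simp
  rw [h]
  simp [runAux, rho]
  exact if_congr Iff.rfl rfl rfl

lemma run_correct (x : ℕ → Fin (n'+2)) (m0 : ℕ)
    (hb : m0 = 0 ∨ x (m0-1) = rho n' k' π (seg x (m0-1))) :
    ∀ j, m0 ≤ j → (∀ u, m0 ≤ u → u < j → x u ≠ rho n' k' π (seg x u)) →
      runAux n' k' π (seg x j).reverse = j - m0 := by
  intro j
  induction j with
  | zero =>
    intro _ _
    simp [seg, runAux]
  | succ j ih =>
    intro hle hmiss
    rcases Nat.lt_or_ge m0 (j+1) with hlt | hge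
    · -- m0 ≤ j
      have hj : m0 ≤ j := by omega
      rw [seg_succ, run_snoc]
      rw [if_neg (hmiss j hj (by omega))]
      rw [ih hj (fun u h1 h2 => hmiss u h1 (by omega))]
      omega
    · -- j + 1 = m0 : base case with hit at m0 - 1 = j
      have hm : m0 = j + 1 := by omega
      rcases hb with rfl | hb
      · omega
      · rw [seg_succ, run_snoc]
        rw [if_pos ?_]
        · omega
        · rw [hm] at hb; simpa using hb

lemma seg_ybit_congr (d q ℓ : ℕ) (G : Code n' k') (x1 x2 : ℕ → Fin (n'+2))
    (h : ∀ u, u < q*(k'+1) + d + ℓ → x1 u = x2 u) :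
    seg (ybit n' k' d G x1) (q*(k'+1) + ℓ) = seg (ybit n' k' d G x2) (q*(k'+1) + ℓ) := by
  unfold seg
  congr 1
  funext a
  unfold ybit
  congr 1
  unfold winpre
  congr 1
  funext b
  apply h
  have h1 : (k'+1) * ((a:ℕ)/(k'+1)) + (a:ℕ)%(k'+1) = a := Nat.div_add_mod _ _
  have h2 : (b:ℕ) ≤ (a:ℕ)%(k'+1) := by omega
  have h3 : (a:ℕ) < q*(k'+1) + ℓ := a.isLt
  have : (a:ℕ)/(k'+1)*(k'+1) + (b:ℕ) ≤ (a:ℕ) := by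
    rw [Nat.mul_comm]; omega
  omega

lemma drop_seg_succ (x : ℕ → Fin (n'+2)) (s j : ℕ) (h : s ≤ j) :
    (seg x (j+1)).drop s = (seg x j).drop s ++ [x j] := by
  rw [seg_succ, List.drop_append_of_le_length (by rw [seg_length]; omega)]

lemma window_matched (x : ℕ → Fin (n'+2)) (m0 t : ℕ)
    (hb : m0 = 0 ∨ x (m0-1) = rho n' k' π (seg x (m0-1)))
    (hmiss : ∀ u, m0 ≤ u → u < m0 + (k'+1)*t + (k'+1) →
        x u ≠ rho n' k' π (seg x u)) :
    ∃ G : Code n' k', ∀ i' < k'+1,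
      ybit n' k' (m0 % (k'+1)) G x
          (((m0 + (k'+1)*t - m0 % (k'+1))/(k'+1))*(k'+1) + i')
        ≠ π (seg (ybit n' k' (m0 % (k'+1)) G x)
          (((m0 + (k'+1)*t - m0 % (k'+1))/(k'+1))*(k'+1) + i')) := by
  set d := m0 % (k'+1) with hd
  set s := m0 + (k'+1)*t with hs0
  set q := (s - d)/(k'+1) with hq
  have hdm : d ≤ m0 := Nat.mod_le _ _
  have hdlt : d < k'+1 := Nat.mod_lt _ (Nat.succ_pos k')
  have hqKd : q*(k'+1) + d = s := by
    have h1 : (k'+1) * (m0 / (k'+1)) + d = m0 := Nat.div_add_mod m0 (k'+1)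
    have h2 : s - d = (k'+1) * (m0/(k'+1) + t) := by rw [Nat.mul_add]; omega
    rw [hq, h2, Nat.mul_div_cancel_left _ (Nat.succ_pos k'), Nat.mul_comm]
    omega
  -- the invariant
  have hInv : ∀ i, i ≤ k'+1 →
      Good n' k' π (k'+1 - i) d q (seg x s) ((seg x (s+i)).drop s) := by
    intro i
    induction i with
    | zero =>
      intro _
      have h0 : (seg x (s+0)).drop s = [] := by
        apply List.drop_eq_nil_of_le
        rw [seg_length]
        omega
      simp only [h0, Nat.sub_zero]
      exact good_top n' k' π d q (seg x s)
    | succ i ih =>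
      intro hiK
      have hi : i < k'+1 := by omega
      have hInvi := ih (by omega)
      have hsplit : k'+1 - i = (k'+1 - (i+1)) + 1 := by omega
      rw [hsplit] at hInvi
      simp only [Good] at hInvi
      have hj : m0 ≤ s + i := by omega
      have hrun : runAux n' k' π (seg x (s+i)).reverse = (s+i) - m0 := by
        apply run_correct n' k' π x m0 hb (s+i) hj
        intro u h1 h2
        exact hmiss u h1 (by omega)
      have harith0 : (s+i) - m0 = (k'+1)*t + i := by omega
      have harith1 : (s+i) - ((s+i) - m0) = m0 := by omega
      have harith2 : ((s+i) - m0) % (k'+1) = i := by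
        rw [harith0, Nat.mul_add_mod, Nat.mod_eq_of_lt hi]
      have harith3 : m0 + (k'+1) * (((s+i) - m0) / (k'+1)) = s := by
        rw [harith0, Nat.mul_add_div (Nat.succ_pos k'), Nat.div_eq_of_lt hi]
        simp [hs0]
      have hrho : rho n' k' π (seg x (s+i))
          = (if h : ∃ rr : Fin (n'+2), ∀ v, v ≠ rr →
              Good n' k' π (k'+1 - i - 1) d q (seg x s) ((seg x (s+i)).drop s ++ [v])
            then h.choose else 0) := by
        rw [rho, hrun]
        unfold choice
        simp only [seg_length, harith1, harith2, harith3,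
          seg_take x s (s+i) (by omega)]
        rfl
      have hcond : ∃ rr : Fin (n'+2), ∀ v, v ≠ rr →
          Good n' k' π (k'+1 - i - 1) d q (seg x s) ((seg x (s+i)).drop s ++ [v]) := by
        obtain ⟨r, hr⟩ := hInvi
        refine ⟨r, fun v hv => ?_⟩
        have h5 := hr v hv
        have he : k'+1 - (i+1) = k'+1 - i - 1 := by omega
        rwa [he] at h5
      rw [dif_pos hcond] at hrho
      have hmiss_i := hmiss (s+i) hj (by omega)
      rw [hrho] at hmiss_i
      have hgood := hcond.choose_spec (x (s+i)) hmiss_i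
      have he : k'+1 - i - 1 = k'+1 - (i+1) := by omega
      rw [he] at hgood
      have hseg : (seg x (s+(i+1))).drop s = (seg x (s+i)).drop s ++ [x (s+i)] := by
        have h6 : s + (i+1) = (s+i) + 1 := by omega
        rw [h6, drop_seg_succ n' x s (s+i) (by omega)]
      rw [hseg]
      exact hgood
  -- conclusion
  have hfin := hInv (k'+1) (le_refl _)
  rw [Nat.sub_self] at hfin
  simp only [Good] at hfin
  obtain ⟨G, hG⟩ := hfin
  refine ⟨G, fun i' hi' => ?_⟩
  set P : List (Fin (n'+2)) := (seg x (s+(k'+1))).drop s with hP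
  have hPlen : P.length = k'+1 := by
    rw [hP, List.length_drop, seg_length]; omega
  have hGi := hG i' (by rw [hPlen]; exact hi')
  have hPtake : ∀ ℓ, ℓ ≤ k'+1 → P.take ℓ = winpre n' k' x d q ℓ := by
    intro ℓ hℓ
    apply List.ext_getElem
    · rw [List.length_take, hPlen, winpre_length]; omega
    · intro b h1 h2
      rw [winpre_length] at h2
      simp only [List.getElem_take, hP, List.getElem_drop, seg, List.getElem_ofFn,
        winpre]
      congr 1
      omega
  have hlhs : label n' k' G (P.take (i'+1)) = ybit n' k' d G x (q*(k'+1) + i') := by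
    rw [hPtake (i'+1) (by omega), ybit_block n' k' d G x q i' hi']
  have hrhs : demand n' k' π d q (seg x s) (P.take i') G
      = flip2 (π (seg (ybit n' k' d G x) (q*(k'+1) + i'))) := by
    unfold demand
    have hlen : (P.take i').length = i' := by
      rw [List.length_take, hPlen]; omega
    rw [hlen]
    congr 2
    apply seg_ybit_congr n' k' d q i' G
    intro u hu
    rw [hqKd] at hu
    unfold virt
    rcases Nat.lt_or_ge u s with h | h
    · rw [List.getD_append _ _ _ _ (by rw [seg_length]; omega)]
      exact seg_getD x s u (by omega) 0
    · rw [List.getD_append_right _ _ _ _ (by rw [seg_length]; omega)]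
      rw [seg_length]
      rw [List.getD_eq_getElem?_getD]
      have hub : u - s < (P.take i').length := by rw [hlen]; omega
      rw [List.getElem?_eq_getElem hub]
      simp only [Option.getD_some, List.getElem_take, hP, List.getElem_drop, seg,
        List.getElem_ofFn]
      congr 1
      omega
  rw [hlhs, hrhs] at hGi
  rw [flip2_iff] at hGi
  exact hGi

lemma qKd_eq (k' m0 t : ℕ) :
    ((m0 + (k'+1)*t - m0 % (k'+1))/(k'+1))*(k'+1) + m0 % (k'+1)
      = m0 + (k'+1)*t := by
  have hdm : m0 % (k'+1) ≤ m0 := Nat.mod_le _ _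
  have h1 : (k'+1) * (m0 / (k'+1)) + m0 % (k'+1) = m0 := Nat.div_add_mod m0 (k'+1)
  have h2 : m0 + (k'+1)*t - m0 % (k'+1) = (k'+1) * (m0/(k'+1) + t) := by
    rw [Nat.mul_add]; omega
  rw [h2, Nat.mul_div_cancel_left _ (Nat.succ_pos k'), Nat.mul_comm]
  omega

lemma find_run_start (x : ℕ → Fin (n'+2)) (m : ℕ)
    (hm2 : ∀ u, m ≤ u → u < m + (k'+1) → x u ≠ rho n' k' π (seg x u)) :
    ∃ m0, m0 ≤ m ∧ (∀ u, m0 ≤ u → u < m + (k'+1) → x u ≠ rho n' k' π (seg x u)) ∧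
      (m0 = 0 ∨ x (m0-1) = rho n' k' π (seg x (m0-1))) := by
  have hPex : ∃ t0, t0 ≤ m ∧ ∀ u, t0 ≤ u → u < m + (k'+1) →
      x u ≠ rho n' k' π (seg x u) := ⟨m, le_refl _, hm2⟩
  refine ⟨Nat.find hPex, (Nat.find_spec hPex).1, (Nat.find_spec hPex).2, ?_⟩
  rcases Nat.eq_zero_or_pos (Nat.find hPex) with h | h
  · exact Or.inl h
  · right
    have hnot := Nat.find_min hPex (show Nat.find hPex - 1 < Nat.find hPex by omega)
    push_neg at hnot
    obtain ⟨u, hu1, hu2, hu3⟩ := hnot (by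
      have := (Nat.find_spec hPex).1
      omega)
    rcases Nat.lt_or_ge u (Nat.find hPex) with h5 | h5
    · have he : u = Nat.find hPex - 1 := by omega
      rw [← he]
      exact hu3
    · exact absurd hu3 (by
        have := (Nat.find_spec hPex).2 u h5 hu2
        simpa using this)

lemma evader_to_binary (x : ℕ → Fin (n'+2))
    (hev : ¬ KPred (k'+1) (rho n' k' π) x) :
    ∃ d, d < k'+1 ∧ ∃ G : Code n' k',
      ¬ WPred (k'+1) π (ybit n' k' d G x) := by
  have hm : ∀ N, ∃ m, N ≤ m ∧ ∀ u, m ≤ u → u < m + (k'+1) →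
      x u ≠ rho n' k' π (seg x u) := by
    unfold KPred at hev
    push_neg at hev
    intro N
    obtain ⟨m, hm1, hm2⟩ := hev N
    exact ⟨m, hm1, fun u h1 h2 => hm2 u h1 h2⟩
  have main : ∀ B, ∃ d q, d < k'+1 ∧ B ≤ q ∧ ∃ G : Code n' k',
      ∀ i' < k'+1, ybit n' k' d G x (q*(k'+1) + i')
        ≠ π (seg (ybit n' k' d G x) (q*(k'+1) + i')) := by
    intro B
    obtain ⟨m, hm1, hm2⟩ := hm ((B+2)*(k'+1))
    obtain ⟨m0, hm0le, hm0miss, hbdry⟩ := find_run_start n' k' π x m hm2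
    obtain ⟨t, ht⟩ : ∃ t, (m - m0)/(k'+1) = t := ⟨_, rfl⟩
    have hdam := Nat.div_add_mod (m - m0) (k'+1)
    rw [ht] at hdam
    have hmod : (m - m0) % (k'+1) < k'+1 := Nat.mod_lt _ (Nat.succ_pos k')
    have hsle : m0 + (k'+1)*t ≤ m := by omega
    have hsge : m + 1 ≤ m0 + (k'+1)*t + (k'+1) := by omega
    have hmiss : ∀ u, m0 ≤ u → u < m0 + (k'+1)*t + (k'+1) →
        x u ≠ rho n' k' π (seg x u) := by
      intro u h1 h2
      exact hm0miss u h1 (by omega)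
    obtain ⟨G, hG⟩ := window_matched n' k' π x m0 t hbdry hmiss
    obtain ⟨q, hqdef⟩ : ∃ q, (m0 + (k'+1)*t - m0 % (k'+1))/(k'+1) = q := ⟨_, rfl⟩
    rw [hqdef] at hG
    have hqe := qKd_eq k' m0 t
    rw [hqdef] at hqe
    have hd : m0 % (k'+1) < k'+1 := Nat.mod_lt _ (Nat.succ_pos k')
    refine ⟨m0 % (k'+1), q, hd, ?_, G, hG⟩
    by_contra hcon
    push_neg at hcon
    have hmul := Nat.mul_le_mul_right (k'+1) (show q+1 ≤ B by omega)
    rw [Nat.succ_mul] at hmul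
    have hBexp : (B+2)*(k'+1) = B*(k'+1) + (k'+1) + (k'+1) := by ring
    omega
  by_contra hcon
  push_neg at hcon
  have hN : ∀ c : Fin (k'+1) × Code n' k', ∃ N, ∀ m, N ≤ m →
      ∃ i, i < k'+1 ∧ (ybit n' k' (c.1 : ℕ) c.2 x) (m*(k'+1)+i)
        = π (seg (ybit n' k' (c.1 : ℕ) c.2 x) (m*(k'+1)+i)) := by
    intro c
    exact hcon (c.1 : ℕ) c.1.isLt c.2
  choose Nf hNf using hN
  obtain ⟨d, q, hd, hq, G, hG⟩ := main ((Finset.univ.sup Nf) + 1)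
  have hble : Nf (⟨d, hd⟩, G) ≤ Finset.univ.sup Nf :=
    Finset.le_sup (Finset.mem_univ _)
  obtain ⟨i, hi, heq⟩ := hNf (⟨d, hd⟩, G) q (by omega)
  exact hG i hi heq

lemma seg_getElem {m : ℕ} (x : ℕ → Fin m) (j t : ℕ) (h : t < (seg x j).length) :
    (seg x j)[t] = x t := by
  simp [seg]

lemma main1 (F : Set (ℕ → Fin (n'+2)))
    (hF : ∀ π' : List (Fin (n'+2)) → Fin (n'+2), ∃ x ∈ F, ¬ KPred (k'+1) π' x) :
    ∃ Y : Set (ℕ → Fin 2), #Y ≤ max (#F) ℵ₀ ∧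
      ∀ π : List (Fin 2) → Fin 2, ∃ y ∈ Y, ¬ WPred (k'+1) π y := by
  classical
  set f : (↥F × (Fin (k'+1) × Code n' k')) → (ℕ → Fin 2) :=
    fun z => ybit n' k' (z.2.1 : ℕ) z.2.2 (z.1 : ℕ → Fin (n'+2)) with hf
  refine ⟨Set.range f, ?_, ?_⟩
  · calc #(Set.range f) ≤ #(↥F × (Fin (k'+1) × Code n' k')) := Cardinal.mk_range_le
      _ = #F * #(Fin (k'+1) × Code n' k') := by
          rw [Cardinal.mk_prod]; simp
      _ ≤ max (#F) ℵ₀ * max (#F) ℵ₀ := by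
          exact mul_le_mul' (le_max_left _ _)
            (le_trans (le_of_lt (Cardinal.lt_aleph0_of_finite _)) (le_max_right _ _))
      _ = max (#F) ℵ₀ := Cardinal.mul_eq_self (le_max_right _ _)
  · intro π
    obtain ⟨x, hxF, hev⟩ := hF (rho n' k' π)
    obtain ⟨d, hd, G, hG⟩ := evader_to_binary n' k' π x hev
    exact ⟨f ⟨⟨x, hxF⟩, ⟨d, hd⟩, G⟩, Set.mem_range_self _, hG⟩

end S3

namespace S3b

lemma finite_pred (n k : ℕ) (hk : 1 ≤ k) (hn : 1 ≤ n) (F : Set (ℕ → Fin n))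
    (hfin : F.Finite) :
    ∃ π : List (Fin n) → Fin n, ∀ x ∈ F, KPred k π x := by
  classical
  refine Set.Finite.induction_on
    (motive := fun F _ => ∃ π : List (Fin n) → Fin n, ∀ x ∈ F, KPred k π x) F hfin
    ⟨fun _ => ⟨0, hn⟩, fun x hx => absurd hx (Set.notMem_empty x)⟩ ?_
  intro x₀ F' hx₀ hfin' ih
  · obtain ⟨π', hπ'⟩ := ih
    refine ⟨fun σ => if seg x₀ σ.length = σ then x₀ σ.length else π' σ, ?_⟩
    intro x hx
    rcases Set.mem_insert_iff.mp hx with rfl | hx'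
    · refine ⟨0, fun m _ => ⟨m, le_refl _, by omega, ?_⟩⟩
      show x m = if seg x (seg x m).length = seg x m then x (seg x m).length
        else π' (seg x m)
      rw [S3.seg_length, if_pos rfl]
    · have hne : x ≠ x₀ := fun he => hx₀ (he ▸ hx')
      have hdiff : ∃ t₀, x t₀ ≠ x₀ t₀ := by
        by_contra hcon
        push_neg at hcon
        exact hne (funext hcon)
      obtain ⟨t₀, ht₀⟩ := hdiff
      obtain ⟨N', hN'⟩ := hπ' x hx'
      refine ⟨max N' (t₀+1), fun m hm => ?_⟩
      obtain ⟨i, hi1, hi2, hieq⟩ := hN' m (le_trans (le_max_left _ _) hm)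
      refine ⟨i, hi1, hi2, ?_⟩
      have hit : t₀ < i := by
        have := le_trans (le_max_right _ _) hm
        omega
      have hsegne : seg x₀ (seg x i).length ≠ seg x i := by
        rw [S3.seg_length]
        intro hcon
        have h1 : (seg x₀ i).getD t₀ ⟨0, hn⟩ = (seg x i).getD t₀ ⟨0, hn⟩ := by
          rw [hcon]
        rw [S3.seg_getD x₀ i t₀ hit _, S3.seg_getD x i t₀ hit _] at h1
        exact ht₀ h1.symm
      show x i = if seg x₀ (seg x i).length = seg x i then x₀ (seg x i).length
        else π' (seg x i)
      rw [if_neg hsegne]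
      exact hieq

def diagList (n' : ℕ) (π : List (Fin (n'+2)) → Fin (n'+2)) : ℕ → List (Fin (n'+2))
  | 0 => []
  | (j+1) => diagList n' π j ++ [π (diagList n' π j) + 1]

noncomputable def diagX (n' : ℕ) (π : List (Fin (n'+2)) → Fin (n'+2)) (j : ℕ) :
    Fin (n'+2) := π (diagList n' π j) + 1

lemma seg_diag (n' : ℕ) (π : List (Fin (n'+2)) → Fin (n'+2)) (j : ℕ) :
    seg (diagX n' π) j = diagList n' π j := by
  induction j with
  | zero => simp [seg, diagList]
  | succ j ih =>
    rw [S3.seg_succ, ih, diagList]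
    rfl

lemma fin_succ_ne (n' : ℕ) (a : Fin (n'+2)) : a + 1 ≠ a := by
  intro h
  have hv : ((a + 1 : Fin (n'+2)) : ℕ) = ((a:ℕ) + 1) % (n'+2) := by
    rw [Fin.val_add, Fin.val_one]
  rw [h] at hv
  have := a.isLt
  rcases Nat.lt_or_ge ((a:ℕ)+1) (n'+2) with h1 | h1
  · rw [Nat.mod_eq_of_lt h1] at hv; omega
  · have h2 : (a:ℕ) = n'+1 := by omega
    rw [h2] at hv
    simp at hv

lemma diag_evade (n' k : ℕ) (hk : 1 ≤ k) (π : List (Fin (n'+2)) → Fin (n'+2)) :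
    ¬ KPred k π (diagX n' π) := by
  rintro ⟨N, hN⟩
  obtain ⟨i, hi1, hi2, hieq⟩ := hN N (le_refl _)
  rw [seg_diag] at hieq
  simp only [diagX] at hieq
  exact fin_succ_ne n' (π (diagList n' π i)) hieq

end S3b

/-- Corollary (dual part): `𝔢ₙᶜᵒⁿˢᵗ(k) ≥ 𝔢̄₂ᶜᵒⁿˢᵗ(k)`: from any family `F ⊆ n^ω` not
k-constantly predictable by a single predictor one obtains a family `Y ⊆ 2^ω`
(of size at most `max(|F|, ℵ₀)`) not weakly k-constantly predictable by a single predictor. -/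
theorem stmt3 (n k : ℕ) (hn : 2 ≤ n) (hk : 1 ≤ k) :
    (∀ F : Set (ℕ → Fin n),
      (∀ π : List (Fin n) → Fin n, ∃ x ∈ F, ¬ KPred k π x) →
      ∃ Y : Set (ℕ → Fin 2),
        #Y ≤ max (#F) ℵ₀ ∧ ∀ π : List (Fin 2) → Fin 2, ∃ y ∈ Y, ¬ WPred k π y) ∧
    eBar 2 k ≤ eConst n k := by
  obtain ⟨n', rfl⟩ : ∃ n', n = n' + 2 := ⟨n - 2, by omega⟩
  obtain ⟨k', rfl⟩ : ∃ k', k = k' + 1 := ⟨k - 1, by omega⟩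
  constructor
  · exact fun F hF => S3.main1 n' k' F hF
  · have hSne : {c | ∃ F : Set (ℕ → Fin (n'+2)), #F = c ∧
        ∀ π : List (Fin (n'+2)) → Fin (n'+2), ∃ x ∈ F, ¬ KPred (k'+1) π x}.Nonempty := by
      refine ⟨#(Set.univ : Set (ℕ → Fin (n'+2))), Set.univ, rfl, fun π => ?_⟩
      exact ⟨S3b.diagX n' π, Set.mem_univ _, S3b.diag_evade n' (k'+1) (by omega) π⟩
    have hmem : ∃ F : Set (ℕ → Fin (n'+2)), #F = eConst (n'+2) (k'+1) ∧
        ∀ π : List (Fin (n'+2)) → Fin (n'+2), ∃ x ∈ F, ¬ KPred (k'+1) π x :=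
      csInf_mem hSne
    obtain ⟨F₀, hcard, hF₀⟩ := hmem
    have hinf : ℵ₀ ≤ eConst (n'+2) (k'+1) := by
      apply le_csInf hSne
      rintro c ⟨F, rfl, hFev⟩
      by_contra hlt
      push_neg at hlt
      have hfin : F.Finite := by
        rw [← Cardinal.lt_aleph0_iff_set_finite]
        exact hlt
      obtain ⟨π, hπ⟩ := S3b.finite_pred (n'+2) (k'+1) (by omega) (by omega) F hfin
      obtain ⟨x, hxF, hev⟩ := hFev π
      exact hev (hπ x hxF)
    obtain ⟨Y, hYc, hYev⟩ := S3.main1 n' k' F₀ hF₀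
    have h1 : eBar 2 (k'+1) ≤ #Y :=
      csInf_le' (show #Y ∈ {c | ∃ F : Set (ℕ → Fin 2), #F = c ∧
        ∀ π : List (Fin 2) → Fin 2, ∃ x ∈ F, ¬ WPred (k'+1) π x} from ⟨Y, rfl, hYev⟩)
    have h2 : #Y ≤ eConst (n'+2) (k'+1) := by
      rw [hcard] at hYc
      rwa [max_eq_left hinf] at hYc
    exact le_trans h1 h2
end

section
/- For every natural number n ≥ 2, the infimum over k ≥ 1 of the cardinals 𝔳_n^const(k) equals the infimum over k ≥ 1 of the cardinals 𝔳_2^const(k): min{ 𝔳_n^const(k) : k ∈ ω, k ≥ 1 } = min{ 𝔳_2^const(k) : k ∈ ω, k ≥ 1 }. -/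
open Cardinal

/-! ### Auxiliary general theory -/

/-- Generic initial segment. -/
def gseg {α : Type*} (x : ℕ → α) (i : ℕ) : List α :=
  List.ofFn (fun j : Fin i => x j)

/-- Generic constant prediction. -/
def KP {α : Type*} (k : ℕ) (π : List α → α) (x : ℕ → α) : Prop :=
  ∃ N, ∀ m, N ≤ m → ∃ i, m ≤ i ∧ i < m + k ∧ x i = π (gseg x i)

/-- The covering sets of predictors. -/
def covSet (α : Type*) (k : ℕ) : Set Cardinal :=
  { c | ∃ P : Set (List α → α), #P = c ∧ ∀ x : ℕ → α, ∃ π ∈ P, KP k π x }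

/-- Generic constant prediction number. -/
noncomputable def vC (α : Type*) (k : ℕ) : Cardinal := sInf (covSet α k)

lemma vConst_eq_vC (n k : ℕ) : vConst n k = vC (Fin n) k := rfl

lemma gseg_length {α : Type*} (x : ℕ → α) (i : ℕ) : (gseg x i).length = i := by
  simp [gseg]

lemma gseg_succ {α : Type*} (x : ℕ → α) (i : ℕ) :
    gseg x (i + 1) = gseg x i ++ [x i] := by
  rw [gseg, List.ofFn_succ']
  simp [gseg, List.concat_eq_append]

lemma gseg_map {α β : Type*} (g : α → β) (x : ℕ → α) (i : ℕ) :
    (gseg x i).map g = gseg (fun j => g (x j)) i := by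
  simp [gseg, List.map_ofFn]; rfl

lemma covSet_nonempty (α : Type*) (k : ℕ) (hk : 1 ≤ k) : (covSet α k).Nonempty := by
  refine ⟨#(Set.univ : Set (List α → α)), Set.univ, rfl, fun x => ?_⟩
  refine ⟨fun s => x s.length, Set.mem_univ _, 0, fun m _ => ⟨m, le_rfl, by omega, ?_⟩⟩
  show x m = x (gseg x m).length
  rw [gseg_length]

lemma vC_mem (α : Type*) (k : ℕ) (hk : 1 ≤ k) :
    ∃ P : Set (List α → α), #P = vC α k ∧ ∀ x : ℕ → α, ∃ π ∈ P, KP k π x :=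
  csInf_mem (covSet_nonempty α k hk)

lemma vC_le (α : Type*) (k : ℕ) (P : Set (List α → α))
    (hcov : ∀ x : ℕ → α, ∃ π ∈ P, KP k π x) : vC α k ≤ #P :=
  csInf_le (OrderBot.bddBelow _) ⟨P, rfl, hcov⟩

/-- Transfer along an injection with retraction: smaller alphabets are easier. -/
lemma vC_le_of_inj {α β : Type u} (e : α → β) (r : β → α) (hre : ∀ a, r (e a) = a)
    (k : ℕ) (hk : 1 ≤ k) : vC α k ≤ vC β k := by
  obtain ⟨P, hP, hcov⟩ := vC_mem β k hk
  have cov : ∀ x : ℕ → α, ∃ π ∈ (fun (π : List β → β) (s : List α) => r (π (s.map e))) '' P,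
      KP k π x := by
    intro x
    obtain ⟨π, hπ, N, hN⟩ := hcov (fun i => e (x i))
    refine ⟨_, ⟨π, hπ, rfl⟩, N, fun m hm => ?_⟩
    obtain ⟨i, h1, h2, h3⟩ := hN m hm
    refine ⟨i, h1, h2, ?_⟩
    have h3' : e (x i) = π (gseg (fun j => e (x j)) i) := h3
    show x i = r (π ((gseg x i).map e))
    rw [gseg_map, h3'.symm, hre]
  calc vC α k ≤ _ := vC_le α k _ cov
    _ ≤ #P := Cardinal.mk_image_le
    _ = vC β k := hP

/-- No finite family of predictors suffices (alphabet of size ≥ 2). -/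
lemma aleph0_le_vC {α : Type*} (a b : α) (hab : a ≠ b) (k : ℕ) (hk : 1 ≤ k) :
    ℵ₀ ≤ vC α k := by
  classical
  by_contra hcon
  push_neg at hcon
  obtain ⟨P, hP, hcov⟩ := vC_mem α k hk
  have hfin : P.Finite := Cardinal.lt_aleph0_iff_set_finite.mp (by rw [hP]; exact hcon)
  set ps : List (List α → α) := hfin.toFinset.toList with hps
  have hmem : ∀ π ∈ P, π ∈ ps := by
    intro π hπ
    simp only [hps, Set.Finite.mem_toFinset, Finset.mem_toList]
    exact hπ
  have hT : 0 < ps.length := by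
    obtain ⟨π, hπ, _⟩ := hcov (fun _ => a)
    exact List.length_pos_iff.mpr (List.ne_nil_of_mem (hmem π hπ))
  set flp : α → α := fun v => if v = a then b else a with hflip
  have hflipne : ∀ v, flp v ≠ v := by
    intro v
    rw [hflip]
    show (if v = a then b else a) ≠ v
    split_ifs with hv
    · subst hv; exact fun h => hab h.symm
    · exact fun h => hv h.symm
  set tgt : ℕ → List α → α := fun i => ps.get ⟨(i / k) % ps.length, Nat.mod_lt _ hT⟩ with htgt
  set F : ℕ → List α := fun i => Nat.rec ([] : List α) (fun j ih => ih ++ [flp (tgt j ih)]) i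
    with hF
  set x : ℕ → α := fun i => flp (tgt i (F i)) with hx
  have hFseg : ∀ i, gseg x i = F i := by
    intro i
    induction i with
    | zero => simp [gseg, hF]
    | succ j ih => rw [gseg_succ, ih]
  obtain ⟨π, hπ, N, hN⟩ := hcov x
  obtain ⟨j, hj⟩ := List.mem_iff_get.mp (hmem π hπ)
  set B : ℕ := j.val + ps.length * N with hB
  have hBN : N ≤ B := le_trans (Nat.le_mul_of_pos_left N hT) (Nat.le_add_left _ _)
  have hmge : N ≤ B * k := le_trans hBN (Nat.le_mul_of_pos_right B hk)
  obtain ⟨i, h1, h2, h3⟩ := hN (B * k) hmge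
  have hdiv : i / k = B := by
    have h2' : i < (B + 1) * k := by rw [Nat.succ_mul]; omega
    exact Nat.div_eq_of_lt_le h1 h2'
  have htgti : tgt i = π := by
    have hmod : B % ps.length = j.val := by
      rw [hB, Nat.add_mul_mod_self_left, Nat.mod_eq_of_lt j.isLt]
    rw [htgt]
    simp only [hdiv, hmod]
    rw [← hj]
  have : x i ≠ π (gseg x i) := by
    rw [hFseg, hx]
    simp only [htgti]
    exact hflipne _
  exact this h3

/-- The key pair lemma (Kada): predict a product alphabet from two predictor families. -/
lemma vC_pair (α β : Type u) (k k' : ℕ) (hk : 1 ≤ k) (hk' : 1 ≤ k') :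
    vC (α × β) (k * k') ≤ vC α k' * vC β k := by
  classical
  obtain ⟨P₁, hP₁, hcov₁⟩ := vC_mem α k' hk'
  obtain ⟨P₂, hP₂, hcov₂⟩ := vC_mem β k hk
  set zstep : (List α → α) → (List α × List β) → (α × β) → (List α × List β) :=
    fun σ st p => (st.1 ++ [p.1], if p.1 = σ st.1 then st.2 ++ [p.2] else st.2) with hzstep
  set zhist : (List α → α) → List (α × β) → List β :=
    fun σ s => (s.foldl (zstep σ) ([], [])).2 with hzhist
  have zfold_fst : ∀ (σ : List α → α) (s : List (α × β)),
      (s.foldl (zstep σ) ([], [])).1 = s.map Prod.fst := by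
    intro σ s
    induction s using List.reverseRecOn with
    | nil => rfl
    | append_singleton s p ih => rw [List.foldl_append]; simp only [hzstep] at ih; simp [hzstep, ih]
  have zhist_snoc : ∀ (σ : List α → α) (s : List (α × β)) (p : α × β),
      zhist σ (s ++ [p]) = zhist σ s ++ (if p.1 = σ (s.map Prod.fst) then [p.2] else []) := by
    intro σ s p
    simp only [hzhist, List.foldl_append, List.foldl_cons, List.foldl_nil]
    rw [hzstep]
    have zf := zfold_fst σ s
    simp only [hzstep] at zf
    simp only [zf]
    split_ifs <;> simp
  set D : (List α → α) → (List β → β) → (List (α × β) → α × β) :=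
    fun σ π s => (σ (s.map Prod.fst), π (zhist σ s)) with hD
  set Q : Set (List (α × β) → α × β) :=
    Set.range (fun q : (↥P₁ × ↥P₂) => D q.1.1 q.2.1) with hQ
  have cov : ∀ x : ℕ → α × β, ∃ π ∈ Q, KP (k * k') π x := by
    intro x
    set u : ℕ → α := fun i => (x i).1 with hu
    set v : ℕ → β := fun i => (x i).2 with hv
    obtain ⟨σ, hσ, N₁, hN₁⟩ := hcov₁ u
    set H : ℕ → Prop := fun i => u i = σ (gseg u i) with hH
    have hinf : (setOf H).Infinite := by
      apply Set.infinite_of_not_bddAbove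
      intro ⟨c, hc⟩
      obtain ⟨i, h1, h2, h3⟩ := hN₁ (max N₁ (c + 1)) (le_max_left _ _)
      have : i ≤ c := hc h3
      have := le_max_right N₁ (c + 1)
      omega
    set z : ℕ → β := fun q => v (Nat.nth H q) with hz
    obtain ⟨π, hπ, N₂, hN₂⟩ := hcov₂ z
    have hmfst : ∀ i, (gseg x i).map Prod.fst = gseg u i := fun i => gseg_map _ _ _
    have hcount_nth : ∀ q, Nat.count H (Nat.nth H q) = q := Nat.count_nth_of_infinite hinf
    have hmemnth : ∀ q, H (Nat.nth H q) := Nat.nth_mem_of_infinite hinf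
    have hmono : StrictMono (Nat.nth H) := Nat.nth_strictMono hinf
    -- count of successor at a point of H
    have hcsucc : ∀ i, H i → Nat.count H (i + 1) = Nat.count H i + 1 := by
      intro i hi; rw [Nat.count_succ, if_pos hi]
    -- m ≤ nth q whenever count m ≤ q
    have hm_le_nth : ∀ m q, Nat.count H m ≤ q → m ≤ Nat.nth H q := by
      intro m q hq
      by_contra hcon
      push_neg at hcon
      have h1 : Nat.count H (Nat.nth H q + 1) ≤ Nat.count H m :=
        Nat.count_monotone H (by omega)
      rw [hcsucc _ (hmemnth q), hcount_nth] at h1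
      omega
    -- nth q ≤ j for any j ∈ H with count j ≥ q
    have hnth_le : ∀ q j, H j → q ≤ Nat.count H j → Nat.nth H q ≤ j := by
      intro q j hj hq
      calc Nat.nth H q ≤ Nat.nth H (Nat.count H j) := hmono.monotone hq
        _ = j := Nat.nth_count hj
    -- gap bound
    have hgap : ∀ q, N₁ ≤ Nat.nth H q + 1 → Nat.nth H (q + 1) ≤ Nat.nth H q + k' := by
      intro q hq
      obtain ⟨jj, hj1, hj2, hj3⟩ := hN₁ (Nat.nth H q + 1) hq
      have hjH : H jj := hj3
      have : q + 1 ≤ Nat.count H jj := by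
        have := Nat.count_monotone H hj1
        rw [hcsucc _ (hmemnth q), hcount_nth] at this
        omega
      have := hnth_le (q + 1) jj hjH this
      omega
    have hiter : ∀ q d, N₁ ≤ Nat.nth H q → Nat.nth H (q + d) ≤ Nat.nth H q + d * k' := by
      intro q d hq
      induction d with
      | zero => simp
      | succ d ih =>
        have h1 : Nat.nth H (q + d + 1) ≤ Nat.nth H (q + d) + k' := by
          apply hgap
          have : Nat.nth H q ≤ Nat.nth H (q + d) := hmono.monotone (by omega)
          omega
        calc Nat.nth H (q + (d + 1)) = Nat.nth H (q + d + 1) := by ring_nf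
          _ ≤ Nat.nth H (q + d) + k' := h1
          _ ≤ Nat.nth H q + d * k' + k' := by omega
          _ = Nat.nth H q + (d + 1) * k' := by ring
    -- the z-history along true prefixes
    have hzseg : ∀ i, zhist σ (gseg x i) = gseg z (Nat.count H i) := by
      intro i
      induction i with
      | zero => simp [gseg, hzhist, Nat.count_zero]
      | succ i ih =>
        rw [gseg_succ, zhist_snoc, ih, hmfst]
        by_cases hHi : H i
        · rw [if_pos (by exact hHi), Nat.count_succ, if_pos hHi, gseg_succ]
          congr 1
          have : Nat.nth H (Nat.count H i) = i := Nat.nth_count hHi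
          simp [hz, this, hv]
        · rw [if_neg (by exact hHi), Nat.count_succ, if_neg hHi]
          simp
    -- correctness criterion
    have key : ∀ i, H i → z (Nat.count H i) = π (gseg z (Nat.count H i)) →
        x i = D σ π (gseg x i) := by
      intro i hHi hhit
      have h2 : π (zhist σ (gseg x i)) = (x i).2 := by
        rw [hzseg, ← hhit]
        show v (Nat.nth H (Nat.count H i)) = (x i).2
        rw [Nat.nth_count hHi]
      have h1 : σ ((gseg x i).map Prod.fst) = (x i).1 := by
        rw [hmfst, ← hHi]
      rw [hD]
      exact Prod.ext h1.symm h2.symm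
    refine ⟨D σ π, ⟨(⟨σ, hσ⟩, ⟨π, hπ⟩), rfl⟩, max N₁ (Nat.nth H N₂ + 1), fun m hm => ?_⟩
    have hmN₁ : N₁ ≤ m := le_trans (le_max_left _ _) hm
    have hq₀N₂ : N₂ ≤ Nat.count H m := by
      have h1 : Nat.count H (Nat.nth H N₂ + 1) ≤ Nat.count H m :=
        Nat.count_monotone H (le_trans (le_max_right _ _) hm)
      rw [hcsucc _ (hmemnth N₂), hcount_nth] at h1
      omega
    obtain ⟨q, hq1, hq2, hq3⟩ := hN₂ (Nat.count H m) hq₀N₂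
    set i : ℕ := Nat.nth H q with hi
    have him : m ≤ i := hm_le_nth m q hq1
    -- upper bound on i
    have hnthq₀ : Nat.nth H (Nat.count H m) < m + k' := by
      obtain ⟨jj, hj1, hj2, hj3⟩ := hN₁ m hmN₁
      have : Nat.nth H (Nat.count H m) ≤ jj :=
        hnth_le _ jj hj3 (Nat.count_monotone H hj1)
      omega
    have hnth_ge : N₁ ≤ Nat.nth H (Nat.count H m) := by
      have := hm_le_nth m (Nat.count H m) le_rfl
      omega
    obtain ⟨t, ht⟩ := Nat.exists_eq_add_of_le hk
    have hqd : q = Nat.count H m + (q - Nat.count H m) := by omega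
    have hub : i ≤ Nat.nth H (Nat.count H m) + (q - Nat.count H m) * k' := by
      have h := hiter (Nat.count H m) (q - Nat.count H m) hnth_ge
      rw [← hqd] at h
      exact h
    have hdk : (q - Nat.count H m) * k' ≤ t * k' :=
      Nat.mul_le_mul_right k' (by omega)
    have hik : i < m + k * k' := by
      have : k * k' = k' + t * k' := by rw [ht]; ring
      omega
    exact ⟨i, him, hik, key i (hmemnth q) (by rw [hcount_nth]; exact hq3)⟩
  have hQcard : #↥Q ≤ #↥P₁ * #↥P₂ := by
    refine le_trans Cardinal.mk_range_le ?_
    rw [Cardinal.mk_prod, Cardinal.lift_id, Cardinal.lift_id]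
  calc vC (α × β) (k * k') ≤ #↥Q := vC_le _ _ Q cov
    _ ≤ #↥P₁ * #↥P₂ := hQcard
    _ = vC α k' * vC β k := by rw [hP₁, hP₂]

/-- `min{ 𝔳ₙᶜᵒⁿˢᵗ(k) : k ≥ 1 } = min{ 𝔳₂ᶜᵒⁿˢᵗ(k) : k ≥ 1 }` for all `n ≥ 2`. -/
theorem stmt6 (n : ℕ) (hn : 2 ≤ n) :
    (⨅ k : ℕ, vConst n (k + 1)) = ⨅ k : ℕ, vConst 2 (k + 1) := by
  have hret2 : ∀ (m : ℕ) (h2m : 2 ≤ m), ∃ r : Fin m → Fin 2, ∀ a : Fin 2, r (Fin.castLE h2m a) = a := by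
    intro m hm
    refine ⟨fun b => if h : (b : ℕ) < 2 then ⟨b, h⟩ else ⟨0, by omega⟩, fun a => ?_⟩
    simp only [Fin.coe_castLE]
    rw [dif_pos a.isLt]
  apply le_antisymm
  · -- hard direction
    apply le_ciInf
    intro k
    have hk1 : 1 ≤ k + 1 := by omega
    have hℵ : ℵ₀ ≤ vC (Fin 2) (k + 1) :=
      aleph0_le_vC (0 : Fin 2) 1 (by decide) (k + 1) hk1
    have main : ∀ l : ℕ, ∃ K, 1 ≤ K ∧ vC (Fin (2 ^ l)) K ≤ vC (Fin 2) (k + 1) := by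
      intro l
      induction l with
      | zero =>
        refine ⟨1, le_rfl, ?_⟩
        have hsub : ∀ c d : Fin (2 ^ 0), c = d := by
          intro c d
          have h1 := c.isLt
          have h2 := d.isLt
          have e0 : (2:ℕ) ^ 0 = 1 := pow_zero 2
          exact Fin.ext (by omega)
        have hone : vC (Fin (2 ^ 0)) 1 ≤ 1 := by
          have := vC_le (Fin (2 ^ 0)) 1 {fun _ => ⟨0, by norm_num⟩}
            (fun x => ⟨_, rfl, 0, fun m _ => ⟨m, le_rfl, by omega, hsub _ _⟩⟩)
          rwa [Cardinal.mk_singleton] at this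
        exact le_trans hone (le_trans Cardinal.one_le_aleph0 hℵ)
      | succ l ih =>
        obtain ⟨K, hK1, hK⟩ := ih
        refine ⟨(k + 1) * K, Nat.mul_pos (by omega) hK1, ?_⟩
        have e : Fin (2 ^ (l + 1)) ≃ Fin (2 ^ l) × Fin 2 :=
          (finCongr (pow_succ 2 l)).trans finProdFinEquiv.symm
        calc vC (Fin (2 ^ (l + 1))) ((k + 1) * K)
            ≤ vC (Fin (2 ^ l) × Fin 2) ((k + 1) * K) :=
              vC_le_of_inj e e.symm e.symm_apply_apply _ (Nat.mul_pos (by omega) hK1)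
          _ ≤ vC (Fin (2 ^ l)) K * vC (Fin 2) (k + 1) :=
              vC_pair _ _ (k + 1) K hk1 hK1
          _ ≤ vC (Fin 2) (k + 1) * vC (Fin 2) (k + 1) := mul_le_mul' hK le_rfl
          _ = vC (Fin 2) (k + 1) := Cardinal.mul_eq_self hℵ
    obtain ⟨K, hK1, hK⟩ := main n
    have hn2 : n ≤ 2 ^ n := Nat.le_of_lt (Nat.lt_two_pow_self (n := n))
    have hretn : ∃ r : Fin (2 ^ n) → Fin n, ∀ a : Fin n, r (Fin.castLE hn2 a) = a := by
      refine ⟨fun b => if h : (b : ℕ) < n then ⟨b, h⟩ else ⟨0, by omega⟩, fun a => ?_⟩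
      simp only [Fin.coe_castLE]
      rw [dif_pos a.isLt]
    obtain ⟨r, hr⟩ := hretn
    have hemb : vC (Fin n) K ≤ vC (Fin (2 ^ n)) K :=
      vC_le_of_inj (Fin.castLE hn2) r hr K hK1
    have hfin : vC (Fin n) K ≤ vC (Fin 2) (k + 1) := le_trans hemb hK
    have hidx : vConst n ((K - 1) + 1) = vC (Fin n) K := by
      show vC (Fin n) ((K - 1) + 1) = vC (Fin n) K
      rw [Nat.sub_add_cancel hK1]
    calc (⨅ k : ℕ, vConst n (k + 1)) ≤ vConst n ((K - 1) + 1) :=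
          ciInf_le (OrderBot.bddBelow _) (K - 1)
      _ = vC (Fin n) K := hidx
      _ ≤ vC (Fin 2) (k + 1) := hfin
      _ = vConst 2 (k + 1) := (vConst_eq_vC 2 (k + 1)).symm
  · -- easy direction
    apply le_ciInf
    intro k
    refine le_trans (ciInf_le (OrderBot.bddBelow _) k) ?_
    obtain ⟨r, hr⟩ := hret2 n hn
    rw [vConst_eq_vC, vConst_eq_vC]
    exact vC_le_of_inj (Fin.castLE hn) r hr (k + 1) (by omega)

-- #print axioms check
end

section
/- Let k ≥ 1 and m ∈ ω, and let T ⊆ 2^{<ω} be a tree (a set of finite binary sequences closed under initial segments). Suppose that for every σ ∈ T with |σ| ≥ m, the set { τ ∈ T : σ ⊂ τ and |τ| = |σ| + k } has fewer than 2^k elements. Then there exists a predictor π : 2^{<ω} → 2 that k-constantly predicts every branch of T; in fact, for every x ∈ [T] and every j ≥ m there is i with j ≤ i < j + k and x(i) = π(x↾i). -/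
open Cardinal

def Esc (T : Set (List (Fin 2))) (σ : List (Fin 2)) : Set ℕ :=
  {t | ∃ s : List (Fin 2), s.length = t ∧ σ ++ s ∉ T}

noncomputable def Gg (T : Set (List (Fin 2))) (σ : List (Fin 2)) : ℕ := sInf (Esc T σ)

open Classical in
noncomputable def cc (T : Set (List (Fin 2))) (σ : List (Fin 2)) : Fin 2 :=
  if h : ∃ c : Fin 2, (Esc T (σ ++ [c])).Nonempty ∧ Gg T (σ ++ [c]) < Gg T σ
  then h.choose else 0

noncomputable def pp (T : Set (List (Fin 2))) (σ : List (Fin 2)) : Fin 2 :=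
  if cc T σ = 0 then 1 else 0

lemma fin2_aux (a b : Fin 2) (h : a ≠ (if b = 0 then 1 else 0)) : a = b := by
  fin_cases a <;> fin_cases b <;> simp_all

lemma seg_succ {x : ℕ → Fin 2} (j : ℕ) : seg x (j+1) = seg x j ++ [x j] := by
  rw [seg, List.ofFn_succ', List.concat_eq_append]
  simp [seg]

lemma seg_len {x : ℕ → Fin 2} (j : ℕ) : (seg x j).length = j := by simp [seg]

lemma ofFn_surj {n : ℕ} (τ : List (Fin 2)) (h : τ.length = n) :
    ∃ f : Fin n → Fin 2, List.ofFn f = τ := by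
  subst h; exact ⟨τ.get, List.ofFn_get τ⟩

/-- If `T ⊆ 2^{<ω}` is a tree in which every node `σ` of length `≥ m` has fewer than `2^k`
extensions in `T` of length `|σ| + k`, then some predictor `π` k-constantly predicts every
branch of `T`; in fact it predicts correctly in every length-`k` interval beyond `m`. -/
theorem stmt8 (k m : ℕ) (hk : 1 ≤ k) (T : Set (List (Fin 2)))
    (htree : ∀ σ ∈ T, ∀ τ : List (Fin 2), τ <+: σ → τ ∈ T)
    (hnarrow : ∀ σ ∈ T, m ≤ σ.length →
      { τ ∈ T | σ <+: τ ∧ σ ≠ τ ∧ τ.length = σ.length + k }.ncard < 2 ^ k) :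
    ∃ π : List (Fin 2) → Fin 2,
      ∀ x : ℕ → Fin 2, (∀ i : ℕ, seg x i ∈ T) →
        KPred k π x ∧ ∀ j : ℕ, m ≤ j → ∃ i, j ≤ i ∧ i < j + k ∧ x i = π (seg x i) := by
  classical
  refine ⟨pp T, fun x Hx => ?_⟩
  have key : ∀ t j, (Esc T (seg x j)).Nonempty → Gg T (seg x j) ≤ t →
      ∃ i, j ≤ i ∧ i < j + t ∧ x i = pp T (seg x i) := by
    intro t
    induction t with
    | zero =>
      intro j hne hle
      exfalso
      have hmem := Nat.sInf_mem hne
      rw [show sInf (Esc T (seg x j)) = Gg T (seg x j) from rfl, Nat.le_zero.mp hle] at hmem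
      obtain ⟨s, hs0, hsT⟩ := hmem
      rw [List.length_eq_zero_iff.mp hs0, List.append_nil] at hsT
      exact hsT (Hx j)
    | succ t ih =>
      intro j hne hle
      have hmem := Nat.sInf_mem hne
      obtain ⟨s, hslen, hsT⟩ := hmem
      have hg0 : Gg T (seg x j) ≠ 0 := by
        intro h0
        rw [show sInf (Esc T (seg x j)) = Gg T (seg x j) from rfl, h0,
          List.length_eq_zero_iff] at hslen
        rw [hslen, List.append_nil] at hsT
        exact hsT (Hx j)
      cases s with
      | nil => exact absurd (by simpa only [List.length_nil, Gg] using hslen.symm) hg0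
      | cons c s' =>
        have hsT' : (seg x j ++ [c]) ++ s' ∉ T := by
          rwa [List.append_assoc, List.singleton_append]
        have hmem' : s'.length ∈ Esc T (seg x j ++ [c]) := ⟨s', rfl, hsT'⟩
        have hex : ∃ c : Fin 2, (Esc T (seg x j ++ [c])).Nonempty ∧
            Gg T (seg x j ++ [c]) < Gg T (seg x j) := by
          refine ⟨c, ⟨_, hmem'⟩, ?_⟩
          have h1 : Gg T (seg x j ++ [c]) ≤ s'.length := Nat.sInf_le hmem'
          have h2 : s'.length + 1 = Gg T (seg x j) := by simpa [Gg] using hslen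
          omega
        by_cases hp : x j = pp T (seg x j)
        · exact ⟨j, le_refl _, by omega, hp⟩
        · have hxj : x j = cc T (seg x j) := fin2_aux _ _ (by simpa [pp] using hp)
          have hcc : cc T (seg x j) = hex.choose := dif_pos hex
          obtain ⟨hne', hlt⟩ := hex.choose_spec
          have hseg1 : seg x (j+1) = seg x j ++ [hex.choose] := by
            rw [seg_succ, hxj, hcc]
          obtain ⟨i, hi1, hi2, hi3⟩ := ih (j+1) (by rw [hseg1]; exact hne')
            (by rw [hseg1]; omega)
          exact ⟨i, by omega, by omega, hi3⟩
  have hbound : ∀ j, m ≤ j → (Esc T (seg x j)).Nonempty ∧ Gg T (seg x j) ≤ k := by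
    intro j hj
    have hex : ∃ s : List (Fin 2), s.length = k ∧ seg x j ++ s ∉ T := by
      by_contra hcon
      push_neg at hcon
      set σ := seg x j with hσ
      set S := { τ ∈ T | σ <+: τ ∧ σ ≠ τ ∧ τ.length = σ.length + k } with hS
      have hsub : Set.range (fun f : Fin k → Fin 2 => σ ++ List.ofFn f) ⊆ S := by
        rintro τ ⟨f, rfl⟩
        refine ⟨hcon _ (by simp), ⟨_, rfl⟩, ?_, by simp⟩
        intro h
        have := congrArg List.length h
        simp at this
        omega
      have hfin : S.Finite := by
        apply Set.Finite.subset ((Set.finite_univ (α := Fin (σ.length + k) → Fin 2)).image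
          (fun f => List.ofFn f))
        intro τ hτ
        obtain ⟨f, hf⟩ := ofFn_surj τ hτ.2.2.2
        exact ⟨f, trivial, hf⟩
      have hinj : Function.Injective (fun f : Fin k → Fin 2 => σ ++ List.ofFn f) := by
        intro f g h
        simp only [List.append_cancel_left_eq] at h
        exact List.ofFn_injective h
      have hcard : (Set.range (fun f : Fin k → Fin 2 => σ ++ List.ofFn f)).ncard = 2 ^ k := by
        rw [← Set.image_univ, Set.ncard_image_of_injective _ hinj, Set.ncard_univ]
        simp [Nat.card_eq_fintype_card]
      have hle := Set.ncard_le_ncard hsub hfin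
      have := hnarrow σ (Hx j) (by rw [hσ, seg_len]; exact hj)
      rw [← hS] at this
      omega
    obtain ⟨s, hs1, hs2⟩ := hex
    have hkmem : k ∈ Esc T (seg x j) := ⟨s, hs1, hs2⟩
    exact ⟨⟨k, hkmem⟩, Nat.sInf_le hkmem⟩
  refine ⟨⟨m, fun j hj => ?_⟩, fun j hj => ?_⟩ <;>
    exact key k j (hbound j hj).1 (hbound j hj).2
end

section
/- For every k ≥ 2, the partial order ℙ^k is σ-(2^k − 1)-linked: ℙ^k can be written as a countable union of subsets P_n such that any 2^k − 1 many elements of a single P_n have a common lower bound in ℙ^k. -/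
open Cardinal

/-- A condition `(ℓ, σ, F)` of the partial order `ℙᵏ`: `ℓ ∈ ω`, `σ : 2^{≤ℓ} → 2`,
`F ⊆ 2^ω` finite, with `f↾ℓ ≠ g↾ℓ` for distinct `f, g ∈ F` and `σ(f↾ℓ) = f(ℓ)` for `f ∈ F`. -/
structure PCond (k : ℕ) : Type where
  len : ℕ
  sig : { l : List (Fin 2) // l.length ≤ len } → Fin 2
  F : Set (ℕ → Fin 2)
  Ffin : F.Finite
  sep : ∀ f ∈ F, ∀ g ∈ F, f ≠ g → seg f len ≠ seg g len
  prd : ∀ f ∈ F, sig ⟨seg f len, by simp [seg]⟩ = f len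

/-- The order on `ℙᵏ`: `(m, τ, G) ≤ (ℓ, σ, F)` iff `m ≥ ℓ`, `τ ⊇ σ`, `G ⊇ F`, and for every
`f ∈ F` and every interval `I ⊆ (ℓ, m)` of length `k` there is `i ∈ I` with `τ(f↾i) = f(i)`. -/
structure PLE (k : ℕ) (q p : PCond k) : Prop where
  hlen : p.len ≤ q.len
  hsig : ∀ (l : List (Fin 2)) (h : l.length ≤ p.len),
    q.sig ⟨l, h.trans hlen⟩ = p.sig ⟨l, h⟩
  hF : p.F ⊆ q.F
  hpred : ∀ f ∈ p.F, ∀ a : ℕ, p.len < a → ∀ _ : a + k ≤ q.len,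
    ∃ i, ∃ _ : a ≤ i, ∃ _ : i < a + k,
      q.sig ⟨seg f i, by simp only [seg, List.length_ofFn]; omega⟩ = f i


namespace Stmt9Aux

lemma fin2_cases (x : Fin 2) : x = 0 ∨ x = 1 := by
  fin_cases x <;> simp

lemma seg_eq_iff {f g : ℕ → Fin 2} {i : ℕ} :
    seg f i = seg g i ↔ ∀ j < i, f j = g j := by
  simp [seg, List.ofFn_inj, funext_iff, Fin.forall_iff]

def maj (G : Finset (ℕ → Fin 2)) (i : ℕ) (l : List (Fin 2)) : Fin 2 :=
  if (G.filter fun g => seg g i = l ∧ g i = 1).card >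
     (G.filter fun g => seg g i = l ∧ g i = 0).card then 1 else 0

def cnt (G : Finset (ℕ → Fin 2)) (f : ℕ → Fin 2) (i : ℕ) : ℕ :=
  (G.filter fun g => seg g i = seg f i).card

lemma cnt_split (G : Finset (ℕ → Fin 2)) (f : ℕ → Fin 2) (i : ℕ) :
    cnt G f i = (G.filter fun g => seg g i = seg f i ∧ g i = 0).card
      + (G.filter fun g => seg g i = seg f i ∧ g i = 1).card := by
  rw [cnt, ← Finset.card_filter_add_card_filter_not
    (p := fun g : ℕ → Fin 2 => g i = 0)]
  congr 1
  · rw [Finset.filter_filter]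
  · rw [Finset.filter_filter]
    congr 1
    apply Finset.filter_congr
    intro g _
    rcases fin2_cases (g i) with h | h <;> simp [h]

lemma cnt_succ (G : Finset (ℕ → Fin 2)) (f : ℕ → Fin 2) (i : ℕ) :
    cnt G f (i + 1) = (G.filter fun g => seg g i = seg f i ∧ g i = f i).card := by
  rw [cnt]
  congr 1
  apply Finset.filter_congr
  intro g _
  simp only [seg_eq_iff]
  constructor
  · intro h
    exact ⟨fun j hj => h j (by omega), h i (by omega)⟩
  · rintro ⟨h1, h2⟩ j hj
    rcases Nat.lt_succ_iff_lt_or_eq.mp hj with h | h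
    · exact h1 j h
    · subst h; exact h2

lemma halve (G : Finset (ℕ → Fin 2)) (f : ℕ → Fin 2) (i : ℕ)
    (hmiss : maj G i (seg f i) ≠ f i) :
    2 * cnt G f (i + 1) ≤ cnt G f i := by
  rw [cnt_split G f i, cnt_succ G f i]
  rw [maj] at hmiss
  rcases fin2_cases (f i) with h | h <;> rw [h] at hmiss ⊢
  · have hc : (G.filter fun g => seg g i = seg f i ∧ g i = 1).card >
        (G.filter fun g => seg g i = seg f i ∧ g i = 0).card := by
      by_contra hc
      rw [if_neg hc] at hmiss
      exact hmiss rfl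
    generalize (G.filter fun g => seg g i = seg f i ∧ g i = 0).card = a at *
    generalize (G.filter fun g => seg g i = seg f i ∧ g i = 1).card = b at *
    omega
  · have hc : ¬ ((G.filter fun g => seg g i = seg f i ∧ g i = 1).card >
        (G.filter fun g => seg g i = seg f i ∧ g i = 0).card) := by
      intro hc
      rw [if_pos hc] at hmiss
      exact hmiss rfl
    generalize (G.filter fun g => seg g i = seg f i ∧ g i = 0).card = a at *
    generalize (G.filter fun g => seg g i = seg f i ∧ g i = 1).card = b at *
    omega

lemma cnt_pos (G : Finset (ℕ → Fin 2)) (f : ℕ → Fin 2) (i : ℕ) (hf : f ∈ G) :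
    1 ≤ cnt G f i := by
  rw [cnt, Nat.one_le_iff_ne_zero, ← Nat.pos_iff_ne_zero, Finset.card_pos]
  exact ⟨f, Finset.mem_filter.mpr ⟨hf, rfl⟩⟩

lemma chain (G : Finset (ℕ → Fin 2)) (f : ℕ → Fin 2) (a t : ℕ)
    (h : ∀ s < t, maj G (a + s) (seg f (a + s)) ≠ f (a + s)) :
    2 ^ t * cnt G f (a + t) ≤ cnt G f a := by
  induction t with
  | zero => simp
  | succ t ih =>
    have h1 := halve G f (a + t) (h t (by omega))
    calc 2 ^ (t + 1) * cnt G f (a + (t + 1))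
        = 2 ^ t * (2 * cnt G f (a + t + 1)) := by ring_nf
      _ ≤ 2 ^ t * cnt G f (a + t) := Nat.mul_le_mul_left _ h1
      _ ≤ cnt G f a := ih (fun s hs => h s (by omega))

lemma cnt_le {N L : ℕ} (G : Finset (ℕ → Fin 2)) (c : (ℕ → Fin 2) → Fin N)
    (hc : ∀ g ∈ G, ∀ g' ∈ G, c g = c g' → (∀ j < L, g j = g' j) → g = g')
    (f : ℕ → Fin 2) (i : ℕ) (hi : L ≤ i) :
    cnt G f i ≤ N := by
  have key : cnt G f i ≤ (Finset.univ : Finset (Fin N)).card := by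
    apply Finset.card_le_card_of_injOn c (fun _ _ => Finset.mem_univ _)
    intro g hg g' hg' hcc
    simp only [Finset.coe_filter, Set.mem_setOf_eq] at hg hg'
    have hseg : seg g i = seg g' i := hg.2.trans hg'.2.symm
    exact hc g hg.1 g' hg'.1 hcc (fun j hj => seg_eq_iff.mp hseg j (lt_of_lt_of_le hj hi))
  simpa using key

lemma maj_singleton (G : Finset (ℕ → Fin 2)) (f : ℕ → Fin 2) (i : ℕ) (hf : f ∈ G)
    (hsing : ∀ g ∈ G, seg g i = seg f i → g = f) :
    maj G i (seg f i) = f i := by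
  rcases fin2_cases (f i) with h | h <;> rw [maj, h]
  · rw [if_neg]
    have h1 : (G.filter fun g => seg g i = seg f i ∧ g i = 1) = ∅ := by
      rw [Finset.filter_eq_empty_iff]
      rintro g hg ⟨hseg, hgi⟩
      rw [hsing g hg hseg, h] at hgi
      exact absurd hgi (by decide)
    simp [h1]
  · rw [if_pos]
    have h0 : (G.filter fun g => seg g i = seg f i ∧ g i = 0) = ∅ := by
      rw [Finset.filter_eq_empty_iff]
      rintro g hg ⟨hseg, hgi⟩
      rw [hsing g hg hseg, h] at hgi
      exact absurd hgi (by decide)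
    rw [h0, Finset.card_empty]
    exact Finset.card_pos.mpr ⟨f, Finset.mem_filter.mpr ⟨hf, rfl, h⟩⟩

lemma sig_congr {L1 L2 : ℕ} {s1 : {l : List (Fin 2) // l.length ≤ L1} → Fin 2}
    {s2 : {l : List (Fin 2) // l.length ≤ L2} → Fin 2}
    (h : (⟨L1, s1⟩ : Σ L, ({l : List (Fin 2) // l.length ≤ L} → Fin 2)) = ⟨L2, s2⟩)
    (l : List (Fin 2)) (h1 : l.length ≤ L1) (h2 : l.length ≤ L2) :
    s1 ⟨l, h1⟩ = s2 ⟨l, h2⟩ := by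
  obtain ⟨hL, hs⟩ := Sigma.mk.inj_iff.mp h
  subst hL
  rw [eq_of_heq hs]

end Stmt9Aux

open Stmt9Aux

/-- `ℙᵏ` is σ-(2ᵏ−1)-linked: it is a countable union of sets `P n` such that any `2ᵏ − 1`
elements of a single `P n` have a common lower bound. -/
theorem stmt9 (k : ℕ) (hk : 2 ≤ k) :
    ∃ P : ℕ → Set (PCond k),
      (∀ p : PCond k, ∃ n, p ∈ P n) ∧
      ∀ n : ℕ, ∀ e : Fin (2 ^ k - 1) → PCond k, (∀ i, e i ∈ P n) →
        ∃ q : PCond k, ∀ i, PLE k q (e i) := by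
  classical
  have instF : ∀ L : ℕ, Finite {l : List (Fin 2) // l.length ≤ L} :=
    fun L => (List.finite_length_le (Fin 2) L).to_subtype
  have instNE : Nonempty (Σ L : ℕ, ({l : List (Fin 2) // l.length ≤ L} → Fin 2)) :=
    ⟨⟨0, fun _ => 0⟩⟩
  obtain ⟨F, hF⟩ := exists_surjective_nat
    (Σ L : ℕ, ({l : List (Fin 2) // l.length ≤ L} → Fin 2))
  refine ⟨fun n => {p | (⟨p.len, p.sig⟩ :
      Σ L, ({l : List (Fin 2) // l.length ≤ L} → Fin 2)) = F n}, fun p => ?_, ?_⟩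
  · obtain ⟨n, hn⟩ := hF ⟨p.len, p.sig⟩
    exact ⟨n, hn.symm⟩
  intro n e he
  have hN4 : 4 ≤ 2 ^ k := by
    calc (4 : ℕ) = 2 ^ 2 := rfl
      _ ≤ 2 ^ k := Nat.pow_le_pow_right (by norm_num) hk
  set i0 : Fin (2 ^ k - 1) := ⟨0, by omega⟩ with hi0
  set ℓ := (e i0).len with hℓdef
  set σ := (e i0).sig with hσdef
  have key : ∀ i, (⟨(e i).len, (e i).sig⟩ :
      Σ L, ({l : List (Fin 2) // l.length ≤ L} → Fin 2)) = ⟨ℓ, σ⟩ :=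
    fun i => (he i).trans (he i0).symm
  have hleni : ∀ i, (e i).len = ℓ := fun i => congrArg Sigma.fst (key i)
  -- the union of the side conditions
  have hGfinite : (⋃ i, (e i).F).Finite := Set.finite_iUnion (fun i => (e i).Ffin)
  set Gfin := hGfinite.toFinset with hGfindef
  have hmemG : ∀ g, g ∈ Gfin ↔ ∃ i, g ∈ (e i).F := by
    intro g
    rw [hGfindef, Set.Finite.mem_toFinset]
    exact Set.mem_iUnion
  -- choice of a condition containing each member
  set c : (ℕ → Fin 2) → Fin (2 ^ k - 1) :=
    fun g => if h : ∃ i, g ∈ (e i).F then h.choose else i0 with hcdef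
  have hcmem : ∀ g ∈ Gfin, g ∈ (e (c g)).F := by
    intro g hg
    obtain ⟨i, hi⟩ := (hmemG g).mp hg
    have hex : ∃ i, g ∈ (e i).F := ⟨i, hi⟩
    simp only [hcdef]
    rw [dif_pos hex]
    exact hex.choose_spec
  have hinj : ∀ g ∈ Gfin, ∀ g' ∈ Gfin, c g = c g' → (∀ j < ℓ, g j = g' j) → g = g' := by
    intro g hg g' hg' hcc hagree
    by_contra hne
    apply (e (c g)).sep g (hcmem g hg) g' (by rw [hcc]; exact hcmem g' hg') hne
    rw [seg_eq_iff]
    intro j hj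
    rw [hleni (c g)] at hj
    exact hagree j hj
  -- a level where all members of the union are separated
  set M0 : ℕ := (Gfin ×ˢ Gfin).sup
    (fun p => if h : p.1 = p.2 then 0 else Nat.find (Function.ne_iff.mp h) + 1) with hM0
  set M := max (ℓ + 1) M0 with hMdef
  have hℓM : ℓ + 1 ≤ M := le_max_left _ _
  have hM0M : M0 ≤ M := le_max_right _ _
  have hsepM : ∀ f ∈ Gfin, ∀ g ∈ Gfin, f ≠ g → seg f M ≠ seg g M := by
    intro f hf g hg hne heq
    have hmem : (f, g) ∈ Gfin ×ˢ Gfin := Finset.mem_product.mpr ⟨hf, hg⟩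
    have hle := Finset.le_sup (f := fun p : (ℕ → Fin 2) × (ℕ → Fin 2) =>
      if h : p.1 = p.2 then 0 else Nat.find (Function.ne_iff.mp h) + 1) hmem
    have hle' : (if h : f = g then 0 else Nat.find (Function.ne_iff.mp h) + 1) ≤ M0 := hle
    rw [dif_neg hne] at hle'
    have hle : Nat.find (Function.ne_iff.mp hne) + 1 ≤ M0 := hle'
    exact Nat.find_spec (Function.ne_iff.mp hne)
      (seg_eq_iff.mp heq _ (by omega))
  -- the new predictor
  set τ : {l : List (Fin 2) // l.length ≤ M} → Fin 2 :=
    fun l => if h : l.1.length ≤ ℓ then σ ⟨l.1, h⟩ else maj Gfin l.1.length l.1 with hτdef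
  have hτσ : ∀ (l : List (Fin 2)) (hl : l.length ≤ M) (h : l.length ≤ ℓ),
      τ ⟨l, hl⟩ = σ ⟨l, h⟩ := by
    intro l hl h
    show (if h' : l.length ≤ ℓ then σ ⟨l, h'⟩ else maj Gfin l.length l) = _
    rw [dif_pos h]
  have hτmaj : ∀ (l : List (Fin 2)) (hl : l.length ≤ M), ¬ l.length ≤ ℓ →
      τ ⟨l, hl⟩ = maj Gfin l.length l := by
    intro l hl h
    show (if h' : l.length ≤ ℓ then σ ⟨l, h'⟩ else maj Gfin l.length l) = _
    rw [dif_neg h]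
  -- the condition q
  have hGsep : ∀ f ∈ ⋃ i, (e i).F, ∀ g ∈ ⋃ i, (e i).F, f ≠ g → seg f M ≠ seg g M := by
    intro f hf g hg
    exact hsepM f (hGfinite.mem_toFinset.mpr hf) g (hGfinite.mem_toFinset.mpr hg)
  have hGprd : ∀ f ∈ ⋃ i, (e i).F, τ ⟨seg f M, by simp [seg]⟩ = f M := by
    intro f hf
    have hfG : f ∈ Gfin := hGfinite.mem_toFinset.mpr hf
    rw [hτmaj (seg f M) (by simp [seg]) (by simp [seg]; omega)]
    rw [show (seg f M).length = M by simp [seg]]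
    apply maj_singleton Gfin f M hfG
    intro g hg hseg
    by_contra hne
    exact hsepM g hg f hfG hne hseg
  refine ⟨⟨M, τ, ⋃ i, (e i).F, hGfinite, hGsep, hGprd⟩, ?_⟩
  intro i
  have hlenle : (e i).len ≤ M := by rw [hleni i]; omega
  refine ⟨hlenle, ?_, ?_, ?_⟩
  · intro l h
    have hlℓ : l.length ≤ ℓ := by rw [hleni i] at h; exact h
    exact (hτσ l (h.trans hlenle) hlℓ).trans (sig_congr (key i) l h hlℓ).symm
  · exact Set.subset_iUnion (fun j => (e j).F) i
  · intro f hf a ha hak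
    have hfG : f ∈ Gfin := (hmemG f).mpr ⟨i, hf⟩
    have haℓ : ℓ < a := by rw [hleni i] at ha; exact ha
    have hak' : a + k ≤ M := hak
    by_contra hcon
    push_neg at hcon
    have hmiss : ∀ s < k, maj Gfin (a + s) (seg f (a + s)) ≠ f (a + s) := by
      intro s hs
      have h3 := hcon (a + s) (by omega) (by omega)
      have h4 : τ ⟨seg f (a + s), by simp only [seg, List.length_ofFn]; omega⟩
          ≠ f (a + s) := h3
      rw [hτmaj (seg f (a + s)) (by simp only [seg, List.length_ofFn]; omega)
        (by simp only [seg, List.length_ofFn]; omega)] at h4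
      rw [show (seg f (a + s)).length = a + s by simp [seg]] at h4
      exact h4
    have hchain := chain Gfin f a k hmiss
    have hle := cnt_le (L := ℓ) Gfin c hinj f a (le_of_lt haℓ)
    have hpos := cnt_pos Gfin f (a + k) hfG
    have h3 : 2 ^ k ≤ 2 ^ k * cnt Gfin f (a + k) :=
      Nat.le_mul_of_pos_right _ (by omega)
    omega
end
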